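/- arXiv:1805.03164 — 12 statements merged into one kernel-verified Lean document; each statement's English description precedes it below -/
import Mathlib

section
/- Let X_1,...,X_q be independent random variables in [0,1] and X = X_1+...+X_q. Suppose γ ∈ (0,1/2) and E[X] = (1-γ)·A + γ·B for some A, B ≥ 0. Then Pr[X < (1-2γ)·A] ≤ exp(-(γ³/2)·max(B, A/2)). -/
/-!
Chernoff's method: for `t ≤ 0` and independent `[0,1]`-valued summands with total mean `m`,
convexity of `exp` gives `E[e^{tX}] ≤ exp((e^t - 1) m)`, so
`Pr[X ≤ a] ≤ exp(-ta + (e^t - 1) m)`.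
Bounding `e^t ≤ 1 + t + t²/2` and choosing `t = -(m - a)/m` yields the lower tail bound
`exp(-(m - a)²/(2m))`. With `m = (1-γ)A + γB` and `a = (1-2γ)A` the gap is `m - a = γ(A + B)`,
and `m ≤ A + B` turns the exponent into at least `γ²(A + B)/2 ≥ (γ³/2) max(B, A/2)`.
-/

open MeasureTheory ProbabilityTheory Real

lemma Real.exp_le_one_add_add_sq_div_two {t : ℝ} (ht : t ≤ 0) :
    exp t ≤ 1 + t + t ^ 2 / 2 := by
  have hquad : 1 + -t + (-t) ^ 2 / 2 ≤ exp (-t) := quadratic_le_exp_of_nonneg (neg_nonneg.2 ht)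
  calc exp t = (exp (-t))⁻¹ := by rw [exp_neg, inv_inv]
    _ ≤ (1 + -t + (-t) ^ 2 / 2)⁻¹ := inv_anti₀ (by nlinarith) hquad
    _ ≤ 1 + t + t ^ 2 / 2 := by
      rw [inv_le_iff_one_le_mul₀ (by nlinarith)]
      -- the product is `1 + t⁴/4`
      nlinarith [pow_two_nonneg (t ^ 2)]

lemma Real.exp_mul_le_one_add_mul_exp_sub_one (t : ℝ) {x : ℝ} (hx : x ∈ Set.Icc (0 : ℝ) 1) :
    exp (t * x) ≤ 1 + x * (exp t - 1) := by
  have hconv := convexOn_exp.2 (Set.mem_univ 0) (Set.mem_univ t) (sub_nonneg.2 hx.2) hx.1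
    (sub_add_cancel 1 x)
  simp only [smul_eq_mul, mul_zero, zero_add, exp_zero, mul_one] at hconv
  rw [mul_comm]
  linarith

namespace ProbabilityTheory

variable {Ω ι : Type*} [MeasurableSpace Ω] {μ : Measure Ω} [IsProbabilityMeasure μ]

lemma mgf_le_exp_integral_of_mem_Icc {Y : Ω → ℝ} (hY : AEMeasurable Y μ)
    (h01 : ∀ᵐ ω ∂μ, Y ω ∈ Set.Icc (0 : ℝ) 1) (t : ℝ) :
    mgf Y μ t ≤ exp ((exp t - 1) * μ[Y]) := by
  have hint : Integrable Y μ := Integrable.of_mem_Icc 0 1 hY h01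
  calc mgf Y μ t ≤ μ[fun ω => 1 + Y ω * (exp t - 1)] :=
        integral_mono_ae (integrable_exp_mul_of_mem_Icc hY h01)
          ((integrable_const 1).add (hint.mul_const _))
          (h01.mono fun ω hω => exp_mul_le_one_add_mul_exp_sub_one t hω)
    _ = (exp t - 1) * μ[Y] + 1 := by
      rw [integral_add (integrable_const 1) (hint.mul_const _), integral_const,
        integral_mul_const]
      simp only [probReal_univ, smul_eq_mul, one_mul]
      ring
    _ ≤ exp ((exp t - 1) * μ[Y]) := add_one_le_exp _

variable {X : ι → Ω → ℝ}

lemma iIndepFun.mgf_sum_le_exp_integral (hind : iIndepFun X μ)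
    (hmeas : ∀ i, AEMeasurable (X i) μ)
    (h01 : ∀ i, ∀ᵐ ω ∂μ, X i ω ∈ Set.Icc (0 : ℝ) 1) (s : Finset ι) (t : ℝ) :
    mgf (∑ i ∈ s, X i) μ t ≤ exp ((exp t - 1) * μ[fun ω => ∑ i ∈ s, X i ω]) := by
  rw [hind.mgf_sum₀ hmeas,
    integral_finsetSum s fun i _ => Integrable.of_mem_Icc 0 1 (hmeas i) (h01 i), Finset.mul_sum,
    exp_sum]
  exact Finset.prod_le_prod (fun i _ => mgf_nonneg)
    fun i _ => mgf_le_exp_integral_of_mem_Icc (hmeas i) (h01 i) t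

lemma iIndepFun.measureReal_sum_le_le_exp_mul (hind : iIndepFun X μ)
    (hmeas : ∀ i, AEMeasurable (X i) μ)
    (h01 : ∀ i, ∀ᵐ ω ∂μ, X i ω ∈ Set.Icc (0 : ℝ) 1)
    (s : Finset ι) (a : ℝ) {t : ℝ} (ht : t ≤ 0) :
    μ.real {ω | ∑ i ∈ s, X i ω ≤ a}
      ≤ exp (-t * a + (exp t - 1) * μ[fun ω => ∑ i ∈ s, X i ω]) := by
  have hsum01 : ∀ᵐ ω ∂μ, (∑ i ∈ s, X i) ω ∈ Set.Icc (0 : ℝ) s.card := by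
    filter_upwards [(Filter.eventually_all_finset s).2 fun i _ => h01 i] with ω hω
    rw [Finset.sum_apply]
    refine ⟨Finset.sum_nonneg fun i hi => (hω i hi).1, ?_⟩
    simpa using Finset.sum_le_sum fun i hi => (hω i hi).2
  have hint := integrable_exp_mul_of_mem_Icc (t := t) (Finset.aemeasurable_sum s fun i _ => hmeas i)
    hsum01
  calc μ.real {ω | ∑ i ∈ s, X i ω ≤ a}
      = μ.real {ω | (∑ i ∈ s, X i) ω ≤ a} := by simp only [Finset.sum_apply]
    _ ≤ exp (-t * a) * mgf (∑ i ∈ s, X i) μ t := measure_le_le_exp_mul_mgf a ht hint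
    _ ≤ exp (-t * a) * exp ((exp t - 1) * μ[fun ω => ∑ i ∈ s, X i ω]) :=
      mul_le_mul_of_nonneg_left (hind.mgf_sum_le_exp_integral hmeas h01 s t) (exp_pos _).le
    _ = _ := (exp_add _ _).symm

theorem iIndepFun.measureReal_sum_le_le_exp (hind : iIndepFun X μ)
    (hmeas : ∀ i, AEMeasurable (X i) μ)
    (h01 : ∀ i, ∀ᵐ ω ∂μ, X i ω ∈ Set.Icc (0 : ℝ) 1)
    (s : Finset ι) {a : ℝ} (ha : a ≤ μ[fun ω => ∑ i ∈ s, X i ω]) :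
    μ.real {ω | ∑ i ∈ s, X i ω ≤ a}
      ≤ exp (-((μ[fun ω => ∑ i ∈ s, X i ω] - a) ^ 2
          / (2 * μ[fun ω => ∑ i ∈ s, X i ω]))) := by
  set m := μ[fun ω => ∑ i ∈ s, X i ω]
  have hm : 0 ≤ m := integral_nonneg_of_ae <| by
    filter_upwards [(Filter.eventually_all_finset s).2 fun i _ => h01 i] with ω hω
    exact Finset.sum_nonneg fun i hi => (hω i hi).1
  rcases hm.eq_or_lt with hm0 | hm0
  · simp [← hm0, measureReal_le_one]
  set t := -((m - a) / m)
  have ht : t ≤ 0 := neg_nonpos.2 (div_nonneg (sub_nonneg.2 ha) hm)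
  refine (hind.measureReal_sum_le_le_exp_mul hmeas h01 s a ht).trans (exp_le_exp.2 ?_)
  calc -t * a + (exp t - 1) * m ≤ -t * a + (t + t ^ 2 / 2) * m := by
        gcongr
        linarith [exp_le_one_add_add_sq_div_two ht]
    _ = -((m - a) ^ 2 / (2 * m)) := by
        simp only [t]
        field_simp
        ring

end ProbabilityTheory

lemma cube_mul_max_le_sq_div_mixed_mean {γ A B : ℝ} (hγ0 : 0 ≤ γ) (hγ1 : γ < 1)
    (hA : 0 ≤ A) (hB : 0 ≤ B) :
    γ ^ 3 / 2 * max B (A / 2) ≤ (γ * (A + B)) ^ 2 / (2 * ((1 - γ) * A + γ * B)) := by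
  have hmax : max B (A / 2) ≤ A + B := max_le (by linarith) (by linarith)
  rcases (show 0 ≤ (1 - γ) * A + γ * B by nlinarith).eq_or_lt with hm | hm
  · obtain rfl : A = 0 := by nlinarith
    obtain rfl | rfl : γ = 0 ∨ B = 0 := by simpa using (show γ * B = 0 by linarith)
    all_goals simp
  · rw [le_div_iff₀ (by positivity)]
    calc γ ^ 3 / 2 * max B (A / 2) * (2 * ((1 - γ) * A + γ * B))
        ≤ γ ^ 2 / 2 * (A + B) * (2 * (A + B)) := by
          have hcube : γ ^ 3 ≤ γ ^ 2 := pow_le_pow_of_le_one hγ0 hγ1.le (by norm_num)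
          have hmean : (1 - γ) * A + γ * B ≤ A + B := by nlinarith
          gcongr
      _ = (γ * (A + B)) ^ 2 := by ring

/-- Specialized Chernoff-type bound: if `X = ∑ X_j` with `X_j` independent, `[0,1]`-valued,
and `E[X] = (1-γ)A + γB` with `A, B ≥ 0` and `γ ∈ (0, 1/2)`, then
`Pr[X < (1-2γ)A] ≤ exp(-(γ³/2) · max(B, A/2))`. -/
theorem chernoff_mixed_bound
    {Ω : Type*} [MeasurableSpace Ω] (μ : Measure Ω) [IsProbabilityMeasure μ]
    {q : ℕ} (X : Fin q → Ω → ℝ)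
    (hmeas : ∀ j, Measurable (X j))
    (hind : iIndepFun X μ)
    (hrange : ∀ j, ∀ ω, X j ω ∈ Set.Icc (0 : ℝ) 1)
    (γ A B : ℝ) (hγ : γ ∈ Set.Ioo (0 : ℝ) (1/2)) (hA : 0 ≤ A) (hB : 0 ≤ B)
    (hE : (μ[fun ω => ∑ j, X j ω]) = (1 - γ) * A + γ * B) :
    (μ {ω | ∑ j, X j ω < (1 - 2*γ) * A}).toReal
      ≤ Real.exp (-(γ^3 / 2) * max B (A / 2)) := by
  obtain ⟨hγ0, hγ2⟩ := hγ
  have hgap : (1 - γ) * A + γ * B - (1 - 2 * γ) * A = γ * (A + B) := by ring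
  have ha : (1 - 2 * γ) * A ≤ μ[fun ω => ∑ j, X j ω] := by rw [hE]; nlinarith
  calc (μ {ω | ∑ j, X j ω < (1 - 2*γ) * A}).toReal
      ≤ μ.real {ω | ∑ j, X j ω ≤ (1 - 2 * γ) * A} :=
        measureReal_mono (Set.ofPred_subset_ofPred.2 fun _ h => h.le)
    _ ≤ exp (-((γ * (A + B)) ^ 2 / (2 * ((1 - γ) * A + γ * B)))) := by
      simpa only [hE, hgap] using hind.measureReal_sum_le_le_exp
        (fun j => (hmeas j).aemeasurable) (fun j => ae_of_all μ (hrange j)) Finset.univ ha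
    _ ≤ exp (-(γ ^ 3 / 2) * max B (A / 2)) := by
      rw [neg_mul, exp_le_exp, neg_le_neg_iff]
      exact cube_mul_max_le_sq_div_mixed_mean hγ0.le (by linarith) hA hB
end

section
/- Let P ⊆ R^n_{≥0} be a convex set of feasible utility vectors and let u* ∈ P maximize the function U ↦ Σ_i ln(U_i) over P, with u*_i > 0 for all i. Then for every d ∈ P, Σ_i d_i / u*_i ≤ n. -/
/-! Fermat's rule on a convex set: the derivative of `U ↦ ∑ i, log (U i)` at `u*` in the
feasible direction `d - u*` is `∑ i, d i / u* i - n`, and it cannot be positive at a maximum. -/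

open Real

theorem IsMaxOn.hasFDerivWithinAt_sub_nonpos {E : Type*} [NormedAddCommGroup E]
    [NormedSpace ℝ E] {f : E → ℝ} {f' : StrongDual ℝ E} {s : Set E} {x y : E}
    (hs : Convex ℝ s) (hx : x ∈ s) (hy : y ∈ s) (h : IsMaxOn f s x)
    (hf : HasFDerivWithinAt f f' s x) : f' (y - x) ≤ 0 :=
  h.localize.hasFDerivWithinAt_nonpos hf
    (sub_mem_posTangentConeAt_of_segment_subset (hs.segment_subset hx hy))

theorem hasFDerivAt_sum_log {ι : Type*} [Fintype ι] {u : ι → ℝ} (hu : ∀ i, u i ≠ 0) :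
    HasFDerivAt (fun U : ι → ℝ => ∑ i, log (U i))
      (∑ i, (u i)⁻¹ • ContinuousLinearMap.proj (R := ℝ) (φ := fun _ : ι => ℝ) i) u :=
  HasFDerivAt.fun_sum fun i _ => (hasFDerivAt_apply i u).log (hu i)

theorem mnw_first_order_optimality_general
    {n : ℕ} (P : Set (Fin n → ℝ)) (hconv : Convex ℝ P)
    (ustar : Fin n → ℝ) (hmem : ustar ∈ P) (hpos : ∀ i, 0 < ustar i)
    (hmax : ∀ U ∈ P, ∑ i, Real.log (U i) ≤ ∑ i, Real.log (ustar i)) :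
    ∀ d ∈ P, ∑ i, d i / ustar i ≤ (n : ℝ) := by
  intro d hd
  have hne : ∀ i, ustar i ≠ 0 := fun i => (hpos i).ne'
  have hderiv := IsMaxOn.hasFDerivWithinAt_sub_nonpos hconv hmem hd hmax
    (hasFDerivAt_sum_log hne).hasFDerivWithinAt
  have hsum : ∑ i, (ustar i)⁻¹ * (d i - ustar i) = ∑ i, d i / ustar i - n := by
    simp [mul_sub, inv_mul_cancel₀ (hne _), div_eq_inv_mul]
  simp only [FunLike.coe_sum, Finset.sum_apply, FunLike.coe_smul,
    Pi.smul_apply, ContinuousLinearMap.proj_apply, Pi.sub_apply, smul_eq_mul] at hderiv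
  linarith

/-- First-order optimality of the fractional Max Nash Welfare solution:
if `u*` maximizes `∑ i, log U_i` over a convex set `P` of nonnegative utility
vectors and `u*_i > 0` for all `i`, then `∑ i, d_i / u*_i ≤ n` for all `d ∈ P`. -/
theorem mnw_first_order_optimality
    {n : ℕ} (P : Set (Fin n → ℝ)) (hconv : Convex ℝ P)
    (hnonneg : ∀ U ∈ P, ∀ i, 0 ≤ U i)
    (ustar : Fin n → ℝ) (hmem : ustar ∈ P) (hpos : ∀ i, 0 < ustar i)
    (hmax : ∀ U ∈ P, ∑ i, Real.log (U i) ≤ ∑ i, Real.log (ustar i)) :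
    ∀ d ∈ P, ∑ i, d i / ustar i ≤ (n : ℝ) :=
  mnw_first_order_optimality_general P hconv ustar hmem hpos hmax
end

section
/- Fix additive utilities u_{ij} ∈ [0,1] for n agents over a ground set W with m elements, and define F(c) = Σ_{i∈[n]} ln(1 + u_i(c)) for a finite set c ⊆ W, where u_i(c) = Σ_{j∈c} u_{ij}. Then for any c ⊆ W, Σ_{j∈c} (F(c) - F(c \ {j})) ≤ n. -/
/-!
By `log x - log y ≤ (x - y) / y`, removing an element `j` of utility `a ≤ 1` from a set of total
utility `S` lowers `log (1 + S)` by at most `a / (1 + S - a) ≤ a / S`. Summed over `j ∈ c` this is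
at most `S / S ≤ 1` for each agent, hence at most `n` in total.
-/

open Real Finset

lemma Real.log_sub_log_le_sub_div {x y : ℝ} (hx : 0 < x) (hy : 0 < y) :
    log x - log y ≤ (x - y) / y := by
  calc log x - log y = log (x / y) := (log_div hx.ne' hy.ne').symm
    _ ≤ x / y - 1 := log_le_sub_one_of_pos (div_pos hx hy)
    _ = (x - y) / y := by field_simp

lemma Real.log_one_add_sub_log_one_add_sub_le {S a : ℝ} (ha₀ : 0 ≤ a) (ha₁ : a ≤ 1)
    (haS : a ≤ S) : log (1 + S) - log (1 + (S - a)) ≤ a / S := by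
  obtain rfl | ha := ha₀.eq_or_lt
  · simp
  calc log (1 + S) - log (1 + (S - a)) ≤ (1 + S - (1 + (S - a))) / (1 + (S - a)) :=
        log_sub_log_le_sub_div (by linarith) (by linarith)
    _ = a / (1 + (S - a)) := by ring
    _ ≤ a / S := div_le_div_of_nonneg_left ha₀ (by linarith) (by linarith)

lemma Finset.sum_log_one_add_sum_sub_log_one_add_sum_erase_le_one {W : Type*} [DecidableEq W]
    (c : Finset W) (f : W → ℝ) (hf₀ : ∀ j ∈ c, 0 ≤ f j) (hf₁ : ∀ j ∈ c, f j ≤ 1) :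
    ∑ j ∈ c, (log (1 + ∑ j' ∈ c, f j') - log (1 + ∑ j' ∈ c.erase j, f j')) ≤ 1 := by
  set S := ∑ j' ∈ c, f j'
  calc ∑ j ∈ c, (log (1 + S) - log (1 + ∑ j' ∈ c.erase j, f j'))
      ≤ ∑ j ∈ c, f j / S := sum_le_sum fun j hj => by
        rw [sum_erase_eq_sub hj]
        exact log_one_add_sub_log_one_add_sub_le (hf₀ j hj) (hf₁ j hj)
          (single_le_sum hf₀ hj)
    _ = S / S := (sum_div c f S).symm
    _ ≤ 1 := div_self_le_one S

/-- For the smooth Nash welfare objective `F(c) = ∑ i, ln(1 + u_i(c))` with additive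
utilities `u_{ij} ∈ [0,1]`, the total marginal contribution of the elements of `c`
is at most `n`: `∑_{j ∈ c} (F(c) - F(c \ {j})) ≤ n`. -/
theorem smooth_nash_marginals_le
    {n : ℕ} {W : Type*} [DecidableEq W]
    (u : Fin n → W → ℝ) (hu : ∀ i j, u i j ∈ Set.Icc (0 : ℝ) 1)
    (c : Finset W) :
    ∑ j ∈ c,
        ((∑ i, Real.log (1 + ∑ j' ∈ c, u i j')) -
         (∑ i, Real.log (1 + ∑ j' ∈ c.erase j, u i j')))
      ≤ (n : ℝ) := by
  simp_rw [← sum_sub_distrib]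
  rw [sum_comm]
  calc ∑ i, ∑ j ∈ c, (log (1 + ∑ j' ∈ c, u i j') - log (1 + ∑ j' ∈ c.erase j, u i j'))
      ≤ ∑ _i : Fin n, (1 : ℝ) := sum_le_sum fun i _ =>
        sum_log_one_add_sum_sub_log_one_add_sum_erase_le_one c (u i)
          (fun j _ => (hu i j).1) (fun j _ => (hu i j).2)
    _ = n := by simp
end

section
/- Let M be a matroid on ground set W with n agents having additive utilities u_{ij} ∈ [0,1], and let c* be a basis of M maximizing F(c) = Σ_i ln(1 + u_i(c)) over all bases. Then c* is a (0,2)-core outcome: there is no subset S of agents and basis c' such that (|S|/n)·u_i(c') ≥ u_i(c*) + 2 for all i ∈ S with at least one strict inequality. -/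
/-!
Write `s i` for the utility of agent `i` under `cstar`. By a Hall-type strong exchange property
of matroids (applied to the fundamental circuits of the basis `cstar`), there is an injection
`σ : c' → cstar` such that exchanging `σ j` for `j` in `cstar` gives a basis for every `j ∈ c'`.
Optimality of `cstar` makes each such exchange non-improving, and concavity of `log` turns this
into `∑ i, (u i j / (s i + 2) - u i (σ j) / (1 + s i - u i (σ j))) ≤ 0`. Summing over `j`, and
using that the loss terms of a single agent add up to at most `1`, gives
`∑ i, u_i(c') / (s i + 2) ≤ n`. A blocking coalition `S` would make each summand with `i ∈ S`
at least `n / |S|`, one of them strictly, which is impossible.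
-/

open Finset Real

namespace Matroid

variable {α : Type*} {M : Matroid α}

lemma Indep.encard_le_encard_of_subset_closure {I J : Set α} (hI : M.Indep I)
    (hIJ : I ⊆ M.closure J) : I.encard ≤ J.encard :=
  calc I.encard ≤ M.eRk (M.closure J) := hI.encard_le_eRk_of_subset hIJ
    _ = M.eRk J := M.eRk_closure_eq J
    _ ≤ J.encard := M.eRk_le_encard J

lemma IsBase.eq_of_isBase_insert_sdiff_singleton {B : Set α} {e f : α} (hB : M.IsBase B)
    (he : e ∈ B) (hf : f ∈ B) (hfe : M.IsBase (insert f (B \ {e}))) : e = f := by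
  by_contra hne
  have hfB : f ∈ B \ {e} := ⟨hf, Ne.symm hne⟩
  rw [Set.insert_eq_of_mem hfB] at hfe
  have hBe : B \ {e} = B := hfe.eq_of_subset_isBase hB Set.sdiff_subset
  exact (hBe.symm ▸ he : e ∈ B \ {e}).2 rfl

lemma IsBase.mem_closure_exchangeable {B : Set α} {f : α} (hB : M.IsBase B) (hf : f ∈ M.E) :
    f ∈ M.closure {e ∈ B | M.IsBase (insert f (B \ {e}))} := by
  by_cases hfB : f ∈ B
  · refine M.subset_closure _ (fun e he ↦ hB.subset_ground he.1) ⟨hfB, ?_⟩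
    rwa [Set.insert_sdiff_singleton, Set.insert_eq_of_mem hfB]
  have hC := hB.fundCircuit_isCircuit hf hfB
  refine M.closure_subset_closure (fun e he ↦ ?_) (hC.mem_closure_sdiff_singleton_of_mem
    (M.mem_fundCircuit f B))
  have heB : e ∈ B := (M.fundCircuit_subset_insert f B he.1).resolve_left he.2
  have hfe : f ≠ e := Ne.symm he.2
  refine ⟨heB, ?_⟩
  rw [Set.insert_sdiff_singleton_comm hfe]
  exact hB.exchange_isBase_of_indep' heB hfB
    ((hB.indep.mem_fundCircuit_iff (by rwa [hB.closure_eq]) hfB).1 he.1)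

theorem IsBase.exists_injOn_isBase_exchange [DecidableEq α] {B C : Finset α}
    (hB : M.IsBase (B : Set α)) (hC : M.Indep (C : Set α)) :
    ∃ σ : α → α, Set.InjOn σ C ∧
      ∀ j ∈ C, σ j ∈ B ∧ M.IsBase ((insert j (B.erase (σ j)) : Finset α) : Set α) := by
  classical
  let N : α → Finset α := fun f ↦ {e ∈ B | M.IsBase (insert f ((B : Set α) \ {e}))}
  have hall : ∀ s : Finset C, #s ≤ #(s.biUnion fun j ↦ N j) := by
    intro s
    have hsC : ((s.image Subtype.val : Finset α) : Set α) ⊆ C := by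
      intro j hj
      obtain ⟨⟨j, hjC⟩, -, rfl⟩ := mem_image.1 hj
      exact hjC
    have hspan : ((s.image Subtype.val : Finset α) : Set α) ⊆
        M.closure ((s.biUnion fun j ↦ N j : Finset α) : Set α) := by
      intro j hj
      obtain ⟨⟨j, hjC⟩, hjs, rfl⟩ := mem_image.1 hj
      refine M.closure_subset_closure (fun e he ↦ ?_)
        (hB.mem_closure_exchangeable (hC.subset_ground hjC))
      exact mem_biUnion.2 ⟨⟨j, hjC⟩, hjs, mem_filter.2 he⟩
    have hcard := (hC.subset hsC).encard_le_encard_of_subset_closure hspan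
    rw [Set.encard_coe_eq_coe_finsetCard, Set.encard_coe_eq_coe_finsetCard,
      card_image_of_injective _ Subtype.val_injective] at hcard
    exact_mod_cast hcard
  obtain ⟨f, hf_inj, hfN⟩ :=
    (all_card_le_biUnion_card_iff_exists_injective fun j : C ↦ N j).1 hall
  refine ⟨fun j ↦ if h : j ∈ C then f ⟨j, h⟩ else j, fun j hj k hk hjk ↦ ?_, fun j hj ↦ ?_⟩
  · simp only [mem_coe] at hj hk
    simp only [hj, hk, dif_pos] at hjk
    exact congrArg Subtype.val (hf_inj hjk)
  · obtain ⟨heB, hbase⟩ := mem_filter.1 (hfN ⟨j, hj⟩)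
    simp only [hj, dif_pos]
    rw [coe_insert, coe_erase]
    exact ⟨heB, hbase⟩

end Matroid

lemma Real.sub_div_le_log_sub_log {a b : ℝ} (ha : 0 < a) (hb : 0 < b) :
    (b - a) / b ≤ log b - log a := by
  have h := one_sub_inv_le_log_of_pos (div_pos hb ha)
  rw [log_div hb.ne' ha.ne', inv_div] at h
  calc (b - a) / b = 1 - a / b := by field_simp
    _ ≤ log b - log a := h

lemma Real.div_sub_div_le_log_exchange {s p q : ℝ} (hp₀ : 0 ≤ p) (hp₁ : p ≤ 1) (hq₀ : 0 ≤ q)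
    (hqs : q ≤ s) :
    p / (s + 2) - q / (1 + s - q) ≤ log (1 + (s - q + p)) - log (1 + s) := by
  have hadd := sub_div_le_log_sub_log (a := 1 + s - q) (b := 1 + (s - q + p))
    (by linarith) (by linarith)
  have hremove := sub_div_le_log_sub_log (a := 1 + s) (b := 1 + s - q) (by linarith) (by linarith)
  have hp : p / (s + 2) ≤ p / (1 + (s - q + p)) :=
    div_le_div_of_nonneg_left hp₀ (by linarith) (by linarith)
  have e₁ : (1 + (s - q + p) - (1 + s - q)) / (1 + (s - q + p)) = p / (1 + (s - q + p)) := by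
    ring
  have e₂ : (1 + s - q - (1 + s)) / (1 + s - q) = -(q / (1 + s - q)) := by ring
  linarith

lemma Finset.sum_div_one_add_sum_sub_le_one {ι : Type*} (s : Finset ι) {f : ι → ℝ}
    (h₀ : ∀ x ∈ s, 0 ≤ f x) (h₁ : ∀ x ∈ s, f x ≤ 1) :
    ∑ x ∈ s, f x / (1 + ∑ y ∈ s, f y - f x) ≤ 1 := by
  rcases (sum_nonneg h₀).eq_or_lt with ht | ht
  · have hf := (sum_eq_zero_iff_of_nonneg h₀).1 ht.symm
    rw [sum_eq_zero fun x hx ↦ by rw [hf x hx, zero_div]]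
    exact zero_le_one
  calc ∑ x ∈ s, f x / (1 + ∑ y ∈ s, f y - f x)
      ≤ ∑ x ∈ s, f x / ∑ y ∈ s, f y :=
        sum_le_sum fun x hx ↦ div_le_div_of_nonneg_left (h₀ x hx) ht (by linarith [h₁ x hx])
    _ = 1 := by rw [← sum_div, div_self ht.ne']

lemma Finset.sum_comp_div_one_add_sum_sub_le_one {α β : Type*} {s : Finset α} {t : Finset β}
    {σ : α → β} (hσ : Set.InjOn σ s) (hst : ∀ j ∈ s, σ j ∈ t) {f : β → ℝ}
    (h₀ : ∀ x ∈ t, 0 ≤ f x) (h₁ : ∀ x ∈ t, f x ≤ 1) :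
    ∑ j ∈ s, f (σ j) / (1 + ∑ x ∈ t, f x - f (σ j)) ≤ 1 := by
  classical
  have hnonneg : ∀ x ∈ t, 0 ≤ f x / (1 + ∑ y ∈ t, f y - f x) := fun x hx ↦
    div_nonneg (h₀ x hx) (by linarith [single_le_sum h₀ hx])
  rw [← sum_image (f := fun x ↦ f x / (1 + ∑ y ∈ t, f y - f x)) hσ]
  calc ∑ x ∈ s.image σ, f x / (1 + ∑ y ∈ t, f y - f x)
      ≤ ∑ x ∈ t, f x / (1 + ∑ y ∈ t, f y - f x) :=
        sum_le_sum_of_subset_of_nonneg (image_subset_iff.2 hst) fun x hx _ ↦ hnonneg x hx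
    _ ≤ 1 := t.sum_div_one_add_sum_sub_le_one h₀ h₁

section SmoothNash

variable {ι α : Type*} [Fintype ι] {u : ι → α → ℝ}

lemma sum_div_sub_div_nonpos_of_exchange [DecidableEq α] (hu : ∀ i j, u i j ∈ Set.Icc (0 : ℝ) 1)
    {c : Finset α} {e f : α} (he : e ∈ c) (hf : f ∉ c.erase e)
    (hmax : ∑ i, log (1 + ∑ j ∈ insert f (c.erase e), u i j) ≤ ∑ i, log (1 + ∑ j ∈ c, u i j)) :
    ∑ i, (u i f / (∑ j ∈ c, u i j + 2) - u i e / (1 + ∑ j ∈ c, u i j - u i e)) ≤ 0 := by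
  have hsum : ∀ i, ∑ j ∈ insert f (c.erase e), u i j = ∑ j ∈ c, u i j - u i e + u i f := by
    intro i
    rw [sum_insert hf, sum_erase_eq_sub he, add_comm]
  calc ∑ i, (u i f / (∑ j ∈ c, u i j + 2) - u i e / (1 + ∑ j ∈ c, u i j - u i e))
      ≤ ∑ i, (log (1 + ∑ j ∈ insert f (c.erase e), u i j) - log (1 + ∑ j ∈ c, u i j)) := by
        refine sum_le_sum fun i _ ↦ ?_
        rw [hsum i]
        exact div_sub_div_le_log_exchange (hu i f).1 (hu i f).2 (hu i e).1
          (single_le_sum (fun j _ ↦ (hu i j).1) he)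
    _ ≤ 0 := by rw [sum_sub_distrib]; linarith

theorem sum_div_le_card_of_isBase_of_maximizes {M : Matroid α}
    (hu : ∀ i j, u i j ∈ Set.Icc (0 : ℝ) 1) {cstar : Finset α} (hcstar : M.IsBase (cstar : Set α))
    (hmax : ∀ c : Finset α, M.IsBase (c : Set α) →
      ∑ i, log (1 + ∑ j ∈ c, u i j) ≤ ∑ i, log (1 + ∑ j ∈ cstar, u i j))
    {c : Finset α} (hc : M.IsBase (c : Set α)) :
    ∑ i, (∑ j ∈ c, u i j) / (∑ j ∈ cstar, u i j + 2) ≤ Fintype.card ι := by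
  classical
  obtain ⟨σ, hσ, hex⟩ := hcstar.exists_injOn_isBase_exchange hc.indep
  set s : ι → ℝ := fun i ↦ ∑ j ∈ cstar, u i j
  set gain : ι → α → ℝ := fun i j ↦ u i j / (s i + 2)
  set loss : ι → α → ℝ := fun i j ↦ u i (σ j) / (1 + s i - u i (σ j))
  have hexchange : ∀ j ∈ c, ∑ i, (gain i j - loss i j) ≤ 0 := by
    intro j hj
    obtain ⟨he, hbase⟩ := hex j hj
    have hj' : j ∉ cstar.erase (σ j) := fun hj' ↦ ne_of_mem_erase hj' <|
      (hcstar.eq_of_isBase_insert_sdiff_singleton he (mem_of_mem_erase hj')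
        (by simpa using hbase)).symm
    exact sum_div_sub_div_nonpos_of_exchange hu he hj' (hmax _ hbase)
  have hloss : ∀ i, ∑ j ∈ c, loss i j ≤ 1 := fun i ↦
    sum_comp_div_one_add_sum_sub_le_one hσ (fun j hj ↦ (hex j hj).1) (fun x _ ↦ (hu i x).1)
      fun x _ ↦ (hu i x).2
  calc ∑ i, (∑ j ∈ c, u i j) / (s i + 2)
      = ∑ j ∈ c, ∑ i, (gain i j - loss i j) + ∑ i, ∑ j ∈ c, loss i j := by
        rw [sum_comm (s := c), ← sum_add_distrib]
        refine sum_congr rfl fun i _ ↦ ?_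
        rw [sum_div, ← sum_add_distrib]
        exact sum_congr rfl fun j _ ↦ by ring
    _ ≤ 0 + ∑ _i : ι, (1 : ℝ) := add_le_add (sum_nonpos hexchange) (sum_le_sum fun i _ ↦ hloss i)
    _ = Fintype.card ι := by simp

end SmoothNash

lemma not_blocking_of_sum_div_le_card {ι : Type*} [Fintype ι] {x y : ι → ℝ}
    (hx : ∀ i, 0 ≤ x i) (hy : ∀ i, 0 < y i) (hsum : ∑ i, x i / y i ≤ Fintype.card ι)
    (S : Finset ι) :
    ¬ ((∀ i ∈ S, (#S : ℝ) / Fintype.card ι * x i ≥ y i) ∧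
      ∃ i ∈ S, (#S : ℝ) / Fintype.card ι * x i > y i) := by
  rintro ⟨hge, i₀, hi₀, hgt⟩
  have hn : (0 : ℝ) < Fintype.card ι := by exact_mod_cast Fintype.card_pos_iff.2 ⟨i₀⟩
  have hk : (0 : ℝ) < #S := by exact_mod_cast card_pos.2 ⟨i₀, hi₀⟩
  have hle : ∀ i ∈ S, (Fintype.card ι : ℝ) / #S ≤ x i / y i := fun i hi ↦ by
    have := hge i hi
    rw [div_le_div_iff₀ hk (hy i)]
    rw [ge_iff_le, div_mul_eq_mul_div, le_div_iff₀ hn] at this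
    linarith
  have hlt : (Fintype.card ι : ℝ) / #S < x i₀ / y i₀ := by
    rw [div_lt_div_iff₀ hk (hy i₀)]
    rw [gt_iff_lt, div_mul_eq_mul_div, lt_div_iff₀ hn] at hgt
    linarith
  have := calc (Fintype.card ι : ℝ)
      = ∑ _i ∈ S, (Fintype.card ι : ℝ) / #S := by rw [sum_const, nsmul_eq_mul]; field_simp
    _ < ∑ i ∈ S, x i / y i := sum_lt_sum hle ⟨i₀, hi₀, hlt⟩
    _ ≤ ∑ i, x i / y i :=
      sum_le_sum_of_subset_of_nonneg (subset_univ S) fun i _ _ ↦ div_nonneg (hx i) (hy i).le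
    _ ≤ Fintype.card ι := hsum
  exact lt_irrefl _ this

theorem matroid_smooth_nash_is_02_core_general
    {α : Type*} {n : ℕ} (M : Matroid α)
    (u : Fin n → α → ℝ) (hu : ∀ i j, u i j ∈ Set.Icc (0 : ℝ) 1)
    (cstar : Finset α) (hcstar : M.IsBase (cstar : Set α))
    (hmax : ∀ c : Finset α, M.IsBase (c : Set α) →
      ∑ i, Real.log (1 + ∑ j ∈ c, u i j) ≤ ∑ i, Real.log (1 + ∑ j ∈ cstar, u i j)) :
    ¬ ∃ (S : Finset (Fin n)) (c' : Finset α), M.IsBase (c' : Set α) ∧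
        (∀ i ∈ S, ((S.card : ℝ) / n) * (∑ j ∈ c', u i j) ≥ (∑ j ∈ cstar, u i j) + 2) ∧
        (∃ i ∈ S, ((S.card : ℝ) / n) * (∑ j ∈ c', u i j) > (∑ j ∈ cstar, u i j) + 2) := by
  rintro ⟨S, c', hc', hblocking⟩
  have hsum := sum_div_le_card_of_isBase_of_maximizes hu hcstar hmax hc'
  have hcore := not_blocking_of_sum_div_le_card (fun i ↦ sum_nonneg fun j _ ↦ (hu i j).1)
    (fun i ↦ by linarith [sum_nonneg fun j (_ : j ∈ cstar) ↦ (hu i j).1]) hsum S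
  rw [Fintype.card_fin] at hcore
  exact hcore hblocking

/-- Under matroid constraints, a basis maximizing the smooth Nash welfare objective
`F(c) = ∑ i, ln(1 + u_i(c))` (with `u_{ij} ∈ [0,1]`) is a `(0,2)`-core outcome. -/
theorem matroid_smooth_nash_is_02_core
    {α : Type*} [DecidableEq α] {n : ℕ} (M : Matroid α)
    (u : Fin n → α → ℝ) (hu : ∀ i j, u i j ∈ Set.Icc (0 : ℝ) 1)
    (cstar : Finset α) (hcstar : M.IsBase (cstar : Set α))
    (hmax : ∀ c : Finset α, M.IsBase (c : Set α) →
      ∑ i, Real.log (1 + ∑ j ∈ c, u i j) ≤ ∑ i, Real.log (1 + ∑ j ∈ cstar, u i j)) :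
    ¬ ∃ (S : Finset (Fin n)) (c' : Finset α), M.IsBase (c' : Set α) ∧
        (∀ i ∈ S, ((S.card : ℝ) / n) * (∑ j ∈ c', u i j) ≥ (∑ j ∈ cstar, u i j) + 2) ∧
        (∃ i ∈ S, ((S.card : ℝ) / n) * (∑ j ∈ c', u i j) > (∑ j ∈ cstar, u i j) + 2) :=
  matroid_smooth_nash_is_02_core_general M u hu cstar hcstar hmax
end

section
/- In the private goods setting with n agents, m goods, and additive utilities u_{ig} ∈ [0,1] (normalized so max_g u_{ig} = 1 for each i), any allocation A (partition of goods among agents) maximizing Π_i (1 + u_i(A_i)) is a (0,1)-core outcome: there is no subset S of agents and allocation B of all goods to agents of S with (|S|/n)·u_i(B_i) ≥ 1 + u_i(A_i) for all i ∈ S, at least one strict. -/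
/-- Private goods: an allocation maximizing `∏ i (1 + u_i(A_i))` (smooth Nash welfare
with smoothing 1) is a `(0,1)`-core outcome. Goods are `Fin m`, agents `Fin n`, an
allocation is a map from goods to agents, and `u_i(A_i) = ∑_{g : A g = i} u i g`. -/
theorem private_goods_smooth_nash_is_01_core
    {n m : ℕ} (u : Fin n → Fin m → ℝ)
    (hu : ∀ i g, u i g ∈ Set.Icc (0 : ℝ) 1)
    (hnorm : ∀ i, ∃ g, u i g = 1)
    (A : Fin m → Fin n)
    (hmax : ∀ A' : Fin m → Fin n,
      ∏ i, (1 + ∑ g ∈ Finset.univ.filter (fun g => A' g = i), u i g) ≤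
      ∏ i, (1 + ∑ g ∈ Finset.univ.filter (fun g => A g = i), u i g)) :
    ¬ ∃ (S : Finset (Fin n)) (B : Fin m → Fin n), (∀ g, B g ∈ S) ∧
        (∀ i ∈ S, ((S.card : ℝ) / n) * (∑ g ∈ Finset.univ.filter (fun g => B g = i), u i g)
            ≥ 1 + ∑ g ∈ Finset.univ.filter (fun g => A g = i), u i g) ∧
        (∃ i ∈ S, ((S.card : ℝ) / n) * (∑ g ∈ Finset.univ.filter (fun g => B g = i), u i g)
            > 1 + ∑ g ∈ Finset.univ.filter (fun g => A g = i), u i g) := by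
  classical
  rintro ⟨S, B, hBS, hall, i₀, hi₀S, hstrict⟩
  have hu0 : ∀ i g, 0 ≤ u i g := fun i g => (hu i g).1
  have hu1 : ∀ i g, u i g ≤ 1 := fun i g => (hu i g).2
  set v : Fin n → ℝ := fun k => ∑ g ∈ Finset.univ.filter (fun g => A g = k), u k g with hvdef
  set w : Fin n → ℝ := fun k => ∑ g ∈ Finset.univ.filter (fun g => B g = k), u k g with hwdef
  have hall' : ∀ i ∈ S, 1 + v i ≤ ((S.card : ℝ) / n) * w i := fun i hi => hall i hi
  have hstrict' : 1 + v i₀ < ((S.card : ℝ) / n) * w i₀ := hstrict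
  have hv0 : ∀ k, 0 ≤ v k := fun k => Finset.sum_nonneg fun g _ => hu0 k g
  have h1v : ∀ k, (0:ℝ) < 1 + v k := fun k => by linarith [hv0 k]
  have hvle : ∀ g, u (A g) g ≤ v (A g) := by
    intro g
    refine Finset.single_le_sum (fun g' _ => hu0 (A g) g') ?_
    simp
  have hden : ∀ g, (1:ℝ) ≤ 1 + v (A g) - u (A g) g := fun g => by
    have := hu1 (A g) g; linarith [hvle g, hu1 (A g) g]
  -- swap inequality from optimality
  have swap : ∀ (g : Fin m) (i : Fin n), i ≠ A g →
      u i g * (1 + v (A g) - u (A g) g) ≤ u (A g) g * (1 + v i) := by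
    intro g i hij
    set j := A g with hj
    set A' := Function.update A g i with hA'
    have hS : ∀ k, (∑ g' ∈ Finset.univ.filter (fun g' => A' g' = k), u k g')
        = v k + (if i = k then u k g else 0) - (if j = k then u k g else 0) := by
      intro k
      have h1 : (∑ g' ∈ Finset.univ.filter (fun g' => A' g' = k), u k g')
          = ∑ g' : Fin m, (if A' g' = k then u k g' else 0) := (Finset.sum_filter _ _)
      have h2 : v k = ∑ g' : Fin m, (if A g' = k then u k g' else 0) := by
        rw [hvdef]; exact Finset.sum_filter _ _
      rw [h1, h2,
        ← Finset.add_sum_erase Finset.univ (fun g' => if A' g' = k then u k g' else 0)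
          (Finset.mem_univ g),
        ← Finset.add_sum_erase Finset.univ (fun g' => if A g' = k then u k g' else 0)
          (Finset.mem_univ g)]
      have h3 : ∑ g' ∈ Finset.univ.erase g, (if A' g' = k then u k g' else 0)
          = ∑ g' ∈ Finset.univ.erase g, (if A g' = k then u k g' else 0) := by
        refine Finset.sum_congr rfl fun g' hg' => ?_
        rw [hA', Function.update_of_ne (Finset.ne_of_mem_erase hg')]
      rw [h3]
      have hA'g : A' g = i := Function.update_self _ _ _
      rw [hA'g, ← hj]
      by_cases hik : i = k <;> by_cases hjk : j = k <;> simp [hik, hjk] <;> ring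
    have hPi : (∑ g' ∈ Finset.univ.filter (fun g' => A' g' = i), u i g') = v i + u i g := by
      rw [hS i]; simp [Ne.symm hij]
    have hPj : (∑ g' ∈ Finset.univ.filter (fun g' => A' g' = j), u j g') = v j - u j g := by
      rw [hS j]; simp [hij]
    have hjmem : j ∈ Finset.univ.erase i := Finset.mem_erase.mpr ⟨Ne.symm hij, Finset.mem_univ j⟩
    have hfac : ∀ f : Fin n → ℝ,
        ∏ k, f k = f i * (f j * ∏ k ∈ (Finset.univ.erase i).erase j, f k) := by
      intro f
      rw [Finset.mul_prod_erase _ f hjmem, Finset.mul_prod_erase _ f (Finset.mem_univ i)]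
    have hmax' := hmax A'
    rw [hfac (fun k => 1 + ∑ g' ∈ Finset.univ.filter (fun g' => A' g' = k), u k g'),
        hfac (fun k => 1 + v k)] at hmax'
    rw [hPi, hPj] at hmax'
    have hrest : ∏ k ∈ (Finset.univ.erase i).erase j,
        (1 + ∑ g' ∈ Finset.univ.filter (fun g' => A' g' = k), u k g')
        = ∏ k ∈ (Finset.univ.erase i).erase j, (1 + v k) := by
      refine Finset.prod_congr rfl fun k hk => ?_
      have hkj : k ≠ j := (Finset.mem_erase.mp hk).1
      have hki : k ≠ i := (Finset.mem_erase.mp (Finset.mem_erase.mp hk).2).1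
      rw [hS k]
      simp [Ne.symm hki, Ne.symm hkj]
    rw [hrest] at hmax'
    have hCpos : 0 < ∏ k ∈ (Finset.univ.erase i).erase j, (1 + v k) :=
      Finset.prod_pos fun k _ => h1v k
    have key : (1 + (v i + u i g)) * (1 + (v j - u j g)) ≤ (1 + v i) * (1 + v j) := by
      have h := hmax'
      rw [← mul_assoc, ← mul_assoc] at h
      exact le_of_mul_le_mul_right h hCpos
    nlinarith [key]
  -- per-good inequality
  have pergood : ∀ g : Fin m,
      u (B g) g / (1 + v (B g)) ≤ u (A g) g / (1 + v (A g) - u (A g) g) := by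
    intro g
    by_cases h : B g = A g
    · rw [h]
      apply div_le_div_of_nonneg_left (hu0 (A g) g) (by linarith [hden g])
      linarith [hu0 (A g) g]
    · rw [div_le_div_iff₀ (h1v (B g)) (by linarith [hden g])]
      exact swap g (B g) h
  -- lower bound on LHS
  have hn : (0:ℝ) < n := by exact_mod_cast Fin.pos i₀
  have hSc : (0:ℝ) < S.card := by exact_mod_cast Finset.card_pos.mpr ⟨i₀, hi₀S⟩
  have hLb : ∀ i ∈ S, (n:ℝ) / S.card ≤ w i / (1 + v i) := by
    intro i hi
    have h := hall' i hi
    rw [div_le_div_iff₀ hSc (h1v i)]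
    have hkey : ((S.card : ℝ) / n) * w i * n = S.card * w i := by field_simp
    nlinarith [h1v i]
  have hLb₀ : (n:ℝ) / S.card < w i₀ / (1 + v i₀) := by
    rw [div_lt_div_iff₀ hSc (h1v i₀)]
    have hkey : ((S.card : ℝ) / n) * w i₀ * n = S.card * w i₀ := by field_simp
    nlinarith [h1v i₀, hstrict']
  -- grouping sums
  have hL : ∑ g : Fin m, u (B g) g / (1 + v (B g)) = ∑ i ∈ S, w i / (1 + v i) := by
    rw [← Finset.sum_fiberwise_of_maps_to (fun g _ => hBS g)
      (fun g => u (B g) g / (1 + v (B g)))]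
    refine Finset.sum_congr rfl fun i _ => ?_
    rw [hwdef]
    simp only
    rw [Finset.sum_div]
    refine Finset.sum_congr rfl fun g hg => ?_
    rw [(Finset.mem_filter.mp hg).2]
  have hR : ∑ g : Fin m, u (A g) g / (1 + v (A g) - u (A g) g) ≤ (n:ℝ) := by
    rw [← Finset.sum_fiberwise_of_maps_to (fun g (_ : g ∈ Finset.univ) => Finset.mem_univ (A g))
      (fun g => u (A g) g / (1 + v (A g) - u (A g) g))]
    calc ∑ j : Fin n, ∑ g ∈ Finset.univ.filter (fun g => A g = j),
          u (A g) g / (1 + v (A g) - u (A g) g)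
        ≤ ∑ _j : Fin n, (1:ℝ) := by
          refine Finset.sum_le_sum fun j _ => ?_
          have hM : (0:ℝ) < max 1 (v j) := lt_of_lt_of_le one_pos (le_max_left _ _)
          calc ∑ g ∈ Finset.univ.filter (fun g => A g = j),
                u (A g) g / (1 + v (A g) - u (A g) g)
              ≤ ∑ g ∈ Finset.univ.filter (fun g => A g = j), u j g / max 1 (v j) := by
                refine Finset.sum_le_sum fun g hg => ?_
                have hAg : A g = j := (Finset.mem_filter.mp hg).2
                rw [hAg]
                apply div_le_div_of_nonneg_left (hu0 j g) hM
                refine max_le ?_ ?_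
                · have := hvle g; rw [hAg] at this; linarith
                · linarith [hu1 j g]
            _ = v j / max 1 (v j) := by rw [hvdef, Finset.sum_div]
            _ ≤ 1 := by
                rw [div_le_one hM]
                exact le_max_right _ _
      _ = (n:ℝ) := by simp
  have hsumlt : (n:ℝ) < ∑ i ∈ S, w i / (1 + v i) := by
    have h1 : ∑ _i ∈ S, (n:ℝ) / S.card < ∑ i ∈ S, w i / (1 + v i) :=
      Finset.sum_lt_sum (fun i hi => hLb i hi) ⟨i₀, hi₀S, hLb₀⟩
    have h2 : ∑ _i ∈ S, (n:ℝ) / S.card = n := by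
      rw [Finset.sum_const, nsmul_eq_mul]
      field_simp
    linarith
  have hmain : ∑ g : Fin m, u (B g) g / (1 + v (B g))
      ≤ ∑ g : Fin m, u (A g) g / (1 + v (A g) - u (A g) g) :=
    Finset.sum_le_sum fun g _ => pergood g
  rw [hL] at hmain
  linarith
end

section
/- In the private goods setting, let A be an allocation maximizing Π_i (1 + u_i(A_i)) (with every good positively valued by some agent). For each good g held by agent j (so u_j(A_j) > 0) define p_g = u_{jg}/u_j(A_j). Then for every agent i and good g, (1 + u_i(A_i))·p_g ≥ u_{ig}. -/
/-- Price-like inequalities from local optimality: if `A` maximizes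
`∏ i (1 + u_i(A_i))` and every good is positively valued by some agent, then with
`p_g = u_{A(g),g} / u_{A(g)}(A_{A(g)})` we have `(1 + u_i(A_i)) · p_g ≥ u_{ig}`
for every agent `i` and good `g`. -/
theorem private_goods_price_inequalities
    {n m : ℕ} (u : Fin n → Fin m → ℝ)
    (hu : ∀ i g, u i g ∈ Set.Icc (0 : ℝ) 1)
    (hvalued : ∀ g, ∃ i, 0 < u i g)
    (A : Fin m → Fin n)
    (hmax : ∀ A' : Fin m → Fin n,
      ∏ i, (1 + ∑ g ∈ Finset.univ.filter (fun g => A' g = i), u i g) ≤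
      ∏ i, (1 + ∑ g ∈ Finset.univ.filter (fun g => A g = i), u i g)) :
    ∀ (i : Fin n) (g : Fin m),
      (1 + ∑ g' ∈ Finset.univ.filter (fun g' => A g' = i), u i g') *
        (u (A g) g / ∑ g' ∈ Finset.univ.filter (fun g' => A g' = A g), u (A g) g')
      ≥ u i g := by
  intro i g
  set S : Fin n → ℝ := fun k => ∑ g' ∈ Finset.univ.filter (fun g' => A g' = k), u k g'
    with hSdef
  set j := A g with hj
  have hSnn : ∀ k, 0 ≤ S k := fun k => Finset.sum_nonneg (fun g' _ => (hu k g').1)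
  have hgmem : g ∈ Finset.univ.filter (fun g' => A g' = j) := by simp [hj]
  -- the key local-optimality inequality
  have key : ∀ i' : Fin n, i' ≠ j →
      (1 + (S i' + u i' g)) * (1 + (S j - u j g)) ≤ (1 + S i') * (1 + S j) := by
    intro i' hi'
    have h := hmax (Function.update A g i')
    set A' := Function.update A g i' with hA'
    set f : Fin n → ℝ :=
      fun k => 1 + ∑ g' ∈ Finset.univ.filter (fun g' => A' g' = k), u k g' with hf
    have hfk : ∀ k, k ≠ i' → k ≠ j → f k = 1 + S k := by
      intro k hk1 hk2
      have : Finset.univ.filter (fun g' => A' g' = k)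
          = Finset.univ.filter (fun g' => A g' = k) := by
        ext g'
        by_cases hg' : g' = g <;>
          simp [hA', Function.update_apply, hg', hk1.symm, hj ▸ hk2.symm, hk2.symm]
      simp [hf, this, hSdef]
    have hfi : f i' = 1 + (S i' + u i' g) := by
      have hset : Finset.univ.filter (fun g' => A' g' = i')
          = insert g (Finset.univ.filter (fun g' => A g' = i')) := by
        ext g'
        by_cases hg' : g' = g <;>
          simp [hA', Function.update_apply, hg']
      have hgnot : g ∉ Finset.univ.filter (fun g' => A g' = i') := by
        simp [← hj, hi'.symm]
      simp [hf, hset, Finset.sum_insert hgnot, hSdef]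
      ring
    have hfj : f j = 1 + (S j - u j g) := by
      have hset : Finset.univ.filter (fun g' => A' g' = j)
          = (Finset.univ.filter (fun g' => A g' = j)).erase g := by
        ext g'
        by_cases hg' : g' = g <;>
          simp [hA', Function.update_apply, hg', hi']
      simp [hf, hset, Finset.sum_erase_eq_sub hgmem, hSdef]
    -- decompose the products
    have hjmem : j ∈ Finset.univ.erase i' := by
      simp [Ne.symm hi']
    have hdec : ∀ F : Fin n → ℝ,
        ∏ k, F k = F i' * (F j * ∏ k ∈ (Finset.univ.erase i').erase j, F k) := by
      intro F
      rw [← Finset.mul_prod_erase _ _ (Finset.mem_univ i'),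
          ← Finset.mul_prod_erase _ _ hjmem]
    have hcongr : ∏ k ∈ (Finset.univ.erase i').erase j, f k
        = ∏ k ∈ (Finset.univ.erase i').erase j, (1 + S k) := by
      refine Finset.prod_congr rfl fun k hk => ?_
      simp only [Finset.mem_erase] at hk
      exact hfk k hk.2.1 hk.1
    have hP : (0:ℝ) < ∏ k ∈ (Finset.univ.erase i').erase j, (1 + S k) :=
      Finset.prod_pos fun k _ => by linarith [hSnn k]
    rw [hdec f, hdec (fun k => 1 + S k), hcongr, hfi, hfj] at h
    have h' : (1 + (S i' + u i' g)) * (1 + (S j - u j g)) *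
        (∏ k ∈ (Finset.univ.erase i').erase j, (1 + S k))
        ≤ (1 + S i') * (1 + S j) *
        (∏ k ∈ (Finset.univ.erase i').erase j, (1 + S k)) := by
      ring_nf at h ⊢
      linarith [h]
    exact le_of_mul_le_mul_right h' hP
  -- the owner values g positively
  have hujg : 0 < u j g := by
    rcases lt_or_eq_of_le (hu j g).1 with h | h
    · exact h
    · exfalso
      obtain ⟨i', hi'⟩ := hvalued g
      have hne : i' ≠ j := by rintro rfl; rw [← h] at hi'; exact lt_irrefl _ hi'
      have := key i' hne
      nlinarith [hSnn i', hSnn j, hi']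
  have hSj : 0 < S j := by
    have : u j g ≤ S j :=
      Finset.single_le_sum (fun g' _ => (hu j g').1) hgmem
    linarith
  rw [ge_iff_le, mul_div_assoc', le_div_iff₀ hSj]
  by_cases hij : i = j
  · subst hij
    nlinarith [hSnn j, (hu j g).1]
  · have := key i hij
    nlinarith [(hu i g).1, (hu j g).2, hSnn i, hSnn j,
      mul_nonneg (hu i g).1 (by linarith [(hu j g).2] : (0:ℝ) ≤ 1 - u j g)]
end

section
/- There exists an instance with matching constraints (feasible outcomes are matchings in an undirected graph) for which no outcome is a (δ, α)-core outcome for any δ ≥ 0 and α < 1. Concretely, in K_{2,2} with two agents, each having unit utility on the edges of one of the two disjoint perfect matchings, any matching gives some agent utility 0, and that agent can deviate to obtain utility 2. -/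
/-- A matching of `K_{2,2}` (edges indexed by `Fin 2 × Fin 2`, i.e. (left, right)
endpoints) is a set of edges pairwise sharing no endpoint. -/
def IsMatchingK22 (c : Finset (Fin 2 × Fin 2)) : Prop :=
  ∀ e ∈ c, ∀ e' ∈ c, e ≠ e' → e.1 ≠ e'.1 ∧ e.2 ≠ e'.2

/-- Lower bound for matching constraints: in `K_{2,2}` with two agents, agent `0`
valuing the edges of one perfect matching and agent `1` the other, every matching
leaves some agent with utility 0, who can deviate to a matching of utility 2; hence
no outcome is a `(δ,α)`-core outcome for any `δ ≥ 0` and `α < 1`. -/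
theorem no_core_matching_K22 :
    ∃ u : Fin 2 → Fin 2 × Fin 2 → ℝ,
      (∀ e : Fin 2 × Fin 2, u 0 e = if e.1 = e.2 then 1 else 0) ∧
      (∀ e : Fin 2 × Fin 2, u 1 e = if e.1 = e.2 then 0 else 1) ∧
      ∀ δ : ℝ, 0 ≤ δ → ∀ α : ℝ, α < 1 →
        ∀ c : Finset (Fin 2 × Fin 2), IsMatchingK22 c →
          ∃ (i : Fin 2) (c' : Finset (Fin 2 × Fin 2)), IsMatchingK22 c' ∧
            (1 / 2 : ℝ) * (∑ e ∈ c', u i e) > (1 + δ) * (∑ e ∈ c, u i e) + α := by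
  classical
  refine ⟨fun i e => if i = 0 then (if e.1 = e.2 then 1 else 0)
                     else (if e.1 = e.2 then 0 else 1), ?_, ?_, ?_⟩
  · intro e; simp
  · intro e; simp
  · intro δ hδ α hα c hc
    by_cases h : ∀ e ∈ c, e.1 = e.2
    · -- agent 1 gets 0, deviates to {(0,1),(1,0)}
      refine ⟨1, {(0,1),(1,0)}, ?_, ?_⟩
      · intro e he e' he' hne
        fin_cases he <;> fin_cases he' <;> simp_all <;> decide
      · have hsum : (∑ e ∈ c, (if (1 : Fin 2) = 0 then (if e.1 = e.2 then (1:ℝ) else 0)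
            else (if e.1 = e.2 then 0 else 1))) = 0 := by
          apply Finset.sum_eq_zero
          intro e he
          simp [h e he]
        rw [hsum]
        have : (∑ e ∈ ({(0,1),(1,0)} : Finset (Fin 2 × Fin 2)),
            (if (1 : Fin 2) = 0 then (if e.1 = e.2 then (1:ℝ) else 0)
            else (if e.1 = e.2 then 0 else 1))) = 2 := by rw [Finset.sum_pair (by decide)]; norm_num
        rw [this]; nlinarith
    · -- some edge is off-diagonal; then all are, agent 0 gets 0
      push_neg at h
      obtain ⟨e0, he0, he0'⟩ := h
      have hall : ∀ e ∈ c, e.1 ≠ e.2 := by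
        intro e he heq
        by_cases hne : e = e0
        · exact he0' (hne ▸ heq)
        · obtain ⟨h1, h2⟩ := hc e he e0 he0 hne
          apply he0'
          omega
      refine ⟨0, {(0,0),(1,1)}, ?_, ?_⟩
      · intro e he e' he' hne
        fin_cases he <;> fin_cases he' <;> simp_all <;> decide
      · have hsum : (∑ e ∈ c, (if (0 : Fin 2) = 0 then (if e.1 = e.2 then (1:ℝ) else 0)
            else (if e.1 = e.2 then 0 else 1))) = 0 := by
          apply Finset.sum_eq_zero
          intro e he
          simp [hall e he]
        rw [hsum]
        have : (∑ e ∈ ({(0,0),(1,1)} : Finset (Fin 2 × Fin 2)),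
            (if (0 : Fin 2) = 0 then (if e.1 = e.2 then (1:ℝ) else 0)
            else (if e.1 = e.2 then 0 else 1))) = 2 := by rw [Finset.sum_pair (by decide)]; norm_num
        rw [this]; nlinarith
end

section
/- Let c and c' be matchings in a graph G with r vertices, and let w_j ≥ w'_j ≥ 0 be weights on edges. For any integer κ ≥ 1, there exists a multiset OPT of augmentations T with respect to c such that: (i) each T ∈ OPT satisfies T ⊆ c' and |T| ≤ κ, (ii) |OPT| ≤ κr, and (iii) Σ_{T∈OPT} gain(T) ≥ κ·W' - (κ+1)·W, where gain(T) = Σ_{j∈T} w'_j - Σ_{j∈M(T)} w_j, W = Σ_{j∈c} w_j, W' = Σ_{j∈c'} w'_j, and M(T) is the set of edges of c sharing a vertex with some edge of T. -/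
/-!
Call two edges of `c'` *linked* if they are distinct and meet a common edge of `c`. Since `c` and
`c'` are matchings, every edge of `c'` is linked to at most two others, so the linked edges form
paths and cycles. List a component cyclically as `x₀, …, xₙ₋₁` (a path is closed up into a cycle)
and take the `n` windows of `κ` cyclically consecutive edges, or `κ` copies of the whole component
when `n < κ`. Then every edge of `c'` lies in exactly `κ` windows and any two linked edges lie
together in at least `κ - 1`. An edge `e ∈ c` meets at most two edges of `c'`, and these are
linked, so by inclusion–exclusion at most `κ + 1` windows touch `e`. Summing the gains over all
windows gives at least `κ W' - (κ + 1) W`, and there are at most `κ |c'| ≤ κ r` windows, as each is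
nonempty.
-/

open scoped Classical

/-- A matching: a finite set of non-loop edges, pairwise sharing no vertex. -/
def IsMatchingSym2 {V : Type*} (c : Finset (Sym2 V)) : Prop :=
  (∀ j ∈ c, ¬ j.IsDiag) ∧
  ∀ j ∈ c, ∀ j' ∈ c, j ≠ j' → ∀ v : V, v ∈ j → v ∉ j'

/-- `M(T)`: the edges of `c` sharing a vertex with some edge of `T`. -/
noncomputable def touchedEdges {V : Type*} (c T : Finset (Sym2 V)) : Finset (Sym2 V) :=
  c.filter (fun j => ∃ e ∈ T, ∃ v : V, v ∈ j ∧ v ∈ e)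

open Finset

namespace Multiset
variable {β γ M : Type*} [DecidableEq γ] [AddCommMonoid M]

theorem sum_map_sum_eq_sum_countP_smul (s : Multiset β) (f : β → Finset γ) {A : Finset γ}
    (hA : ∀ b ∈ s, f b ⊆ A) (g : γ → M) :
    (s.map fun b => ∑ x ∈ f b, g x).sum = ∑ x ∈ A, s.countP (fun b => x ∈ f b) • g x := by
  induction s using Multiset.induction with
  | empty => simp
  | cons b s ih =>
    have hb : ∑ x ∈ f b, g x = ∑ x ∈ A, (if x ∈ f b then 1 else 0) • g x := by
      simp only [ite_smul, one_smul, zero_smul, sum_ite_mem,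
        inter_eq_right.mpr (hA b (mem_cons_self b s))]
    rw [map_cons, sum_cons, ih fun b' hb' => hA b' (mem_cons_of_mem hb'), hb, ← sum_add_distrib]
    simp only [countP_cons, add_smul, add_comm]

theorem countP_or_add_countP_and (s : Multiset β) (p q : β → Prop) [DecidablePred p]
    [DecidablePred q] :
    s.countP (fun b => p b ∨ q b) + s.countP (fun b => p b ∧ q b) = s.countP p + s.countP q := by
  induction s using Multiset.induction with
  | empty => simp
  | cons b s ih =>
    simp only [countP_cons]
    by_cases hp : p b <;> by_cases hq : q b <;> simp [hp, hq] <;> omega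

end Multiset

namespace ZMod
variable {n κ : ℕ}

theorem natCast_injOn_range : Set.InjOn (Nat.cast : ℕ → ZMod n) (range n) := by
  intro a ha b hb hab
  rw [coe_range, Set.mem_Iio] at ha hb
  rwa [natCast_eq_natCast_iff', Nat.mod_eq_of_lt ha, Nat.mod_eq_of_lt hb] at hab

theorem card_image_range_sub (hκ : κ ≤ n) (j : ZMod n) :
    ((range κ).image fun k : ℕ => j - k).card = κ := by
  rw [card_image_of_injOn, card_range]
  intro a ha b hb hab
  exact natCast_injOn_range (range_subset_range.mpr hκ ha) (range_subset_range.mpr hκ hb)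
    (sub_right_injective hab)

noncomputable def cyclicWindow (κ : ℕ) (i : ZMod n) : Finset (ZMod n) :=
  (range κ).image fun k : ℕ => i + (k : ZMod n)

theorem mem_cyclicWindow {i j : ZMod n} : j ∈ cyclicWindow κ i ↔ ∃ k < κ, i + k = j := by
  simp only [cyclicWindow, mem_image, mem_range]

theorem card_cyclicWindow_le (i : ZMod n) : (cyclicWindow κ i).card ≤ κ :=
  card_image_le.trans_eq (card_range κ)

variable [NeZero n]

theorem card_filter_mem_cyclicWindow (hκ : κ ≤ n) (j : ZMod n) :
    (univ.filter fun i => j ∈ cyclicWindow κ i).card = κ := by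
  convert card_image_range_sub hκ j using 2
  ext i
  simp only [mem_filter, mem_univ, true_and, mem_cyclicWindow, mem_image, mem_range,
    sub_eq_iff_eq_add, eq_comm (a := j)]

theorem le_card_filter_mem_cyclicWindow_succ (hκ : κ ≤ n) (j : ZMod n) :
    κ - 1 ≤ (univ.filter fun i => j ∈ cyclicWindow κ i ∧ j + 1 ∈ cyclicWindow κ i).card := by
  refine (card_image_range_sub ((Nat.sub_le κ 1).trans hκ) j).symm.trans_le
    (card_le_card fun i hi => ?_)
  obtain ⟨k, hk, rfl⟩ := mem_image.mp hi
  rw [mem_range] at hk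
  simp only [mem_filter, mem_univ, true_and, mem_cyclicWindow]
  exact ⟨⟨k, by omega, by ring⟩, ⟨k + 1, by omega, by push_cast; ring⟩⟩

end ZMod

section WindowCover
variable {α β : Type*} [DecidableEq α] {κ : ℕ} {r : α → α → Prop} {X Y : Finset α}
  {𝒮 𝒯 : Multiset (Finset α)}

structure IsWindowCover (κ : ℕ) (r : α → α → Prop) (X : Finset α) (𝒮 : Multiset (Finset α)) :
    Prop where
  subset : ∀ S ∈ 𝒮, S ⊆ X
  nonempty : ∀ S ∈ 𝒮, S.Nonempty
  card_le : ∀ S ∈ 𝒮, S.card ≤ κ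
  countP_mem : ∀ x ∈ X, 𝒮.countP (x ∈ ·) = κ
  countP_mem_and_mem : ∀ x ∈ X, ∀ y ∈ X, r x y → κ - 1 ≤ 𝒮.countP fun S => x ∈ S ∧ y ∈ S

theorem isWindowCover_empty : IsWindowCover κ r ∅ 0 where
  subset := by simp
  nonempty := by simp
  card_le := by simp
  countP_mem := by simp
  countP_mem_and_mem := by simp

theorem isWindowCover_replicate (hX : X.Nonempty) (hXκ : X.card ≤ κ) :
    IsWindowCover κ r X (Multiset.replicate κ X) := by
  have hmem : ∀ S ∈ Multiset.replicate κ X, S = X := fun S hS => Multiset.eq_of_mem_replicate hS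
  refine ⟨fun S hS => (hmem S hS).subset, fun S hS => hmem S hS ▸ hX, fun S hS => hmem S hS ▸ hXκ,
    fun x hx => ?_, fun x hx y hy _ => ?_⟩
  · rw [Multiset.countP_eq_card.mpr fun S hS => hmem S hS ▸ hx, Multiset.card_replicate]
  · rw [Multiset.countP_eq_card.mpr fun S hS => hmem S hS ▸ ⟨hx, hy⟩, Multiset.card_replicate]
    exact Nat.sub_le κ 1

theorem isWindowCover_cyclicWindow {n : ℕ} [NeZero n] (hκ : 1 ≤ κ) (hκn : κ ≤ n) :
    IsWindowCover κ (fun i j : ZMod n => j = i + 1 ∨ i = j + 1) univ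
      (univ.val.map (ZMod.cyclicWindow κ)) := by
  have hcount (p : Finset (ZMod n) → Prop) [DecidablePred p] :
      ((univ : Finset (ZMod n)).val.map (ZMod.cyclicWindow κ)).countP p
        = (univ.filter fun i => p (ZMod.cyclicWindow κ i)).card := by
    rw [Multiset.countP_map]; rfl
  refine ⟨fun _ _ => subset_univ _, ?_, ?_, fun j _ => ?_, ?_⟩
  · simp only [Multiset.mem_map, mem_val, mem_univ, true_and, forall_exists_index,
      forall_apply_eq_imp_iff]
    exact fun i => ⟨i, ZMod.mem_cyclicWindow.mpr ⟨0, hκ, by simp⟩⟩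
  · simp only [Multiset.mem_map, mem_val, mem_univ, true_and, forall_exists_index,
      forall_apply_eq_imp_iff]
    exact fun i => ZMod.card_cyclicWindow_le i
  · rw [hcount]
    exact ZMod.card_filter_mem_cyclicWindow hκn j
  · rintro i - j - (rfl | rfl) <;> rw [hcount]
    · exact ZMod.le_card_filter_mem_cyclicWindow_succ hκn i
    · simpa only [and_comm] using ZMod.le_card_filter_mem_cyclicWindow_succ hκn j

noncomputable def cycleCover (κ n : ℕ) [NeZero n] : Multiset (Finset (ZMod n)) :=
  if κ ≤ n then univ.val.map (ZMod.cyclicWindow κ) else Multiset.replicate κ univ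

theorem isWindowCover_cycleCover {n : ℕ} [NeZero n] (hκ : 1 ≤ κ) :
    IsWindowCover κ (fun i j : ZMod n => j = i + 1 ∨ i = j + 1) univ (cycleCover κ n) := by
  unfold cycleCover
  split_ifs with hκn
  · exact isWindowCover_cyclicWindow hκ hκn
  · exact isWindowCover_replicate univ_nonempty (by rw [card_univ, ZMod.card]; omega)

theorem IsWindowCover.countP_mem_eq_zero (h : IsWindowCover κ r X 𝒮) {x : α} (hx : x ∉ X) :
    𝒮.countP (x ∈ ·) = 0 :=
  Multiset.countP_eq_zero.mpr fun S hS hxS => hx (h.subset S hS hxS)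

theorem IsWindowCover.add (h₁ : IsWindowCover κ r X 𝒮) (h₂ : IsWindowCover κ r Y 𝒯)
    (hXY : Disjoint X Y) (hsep : ∀ x ∈ X, ∀ y ∈ Y, ¬ r x y ∧ ¬ r y x) :
    IsWindowCover κ r (X ∪ Y) (𝒮 + 𝒯) where
  subset S hS := (Multiset.mem_add.mp hS).elim (fun h => (h₁.subset S h).trans subset_union_left)
    (fun h => (h₂.subset S h).trans subset_union_right)
  nonempty S hS := (Multiset.mem_add.mp hS).elim (h₁.nonempty S) (h₂.nonempty S)
  card_le S hS := (Multiset.mem_add.mp hS).elim (h₁.card_le S) (h₂.card_le S)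
  countP_mem x hx := by
    rw [Multiset.countP_add]
    rcases mem_union.mp hx with hx | hx
    · rw [h₁.countP_mem x hx, h₂.countP_mem_eq_zero (disjoint_left.mp hXY hx), add_zero]
    · rw [h₂.countP_mem x hx, h₁.countP_mem_eq_zero (disjoint_right.mp hXY hx), zero_add]
  countP_mem_and_mem x hx y hy hr := by
    rw [Multiset.countP_add]
    rcases mem_union.mp hx with hx | hx <;> rcases mem_union.mp hy with hy | hy
    · exact (h₁.countP_mem_and_mem x hx y hy hr).trans (Nat.le_add_right _ _)
    · exact absurd hr (hsep x hx y hy).1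
    · exact absurd hr (hsep y hy x hx).2
    · exact (h₂.countP_mem_and_mem x hx y hy hr).trans (Nat.le_add_left _ _)

theorem IsWindowCover.image [DecidableEq β] {r' : β → β → Prop} {X : Finset β}
    {𝒮 : Multiset (Finset β)} (h : IsWindowCover κ r' X 𝒮) {f : β → α} (hf : Function.Injective f)
    (hr : ∀ a ∈ X, ∀ b ∈ X, r (f a) (f b) → r' a b) :
    IsWindowCover κ r (X.image f) (𝒮.map (Finset.image f)) := by
  have hcount (p : Finset α → Prop) [DecidablePred p] :
      (𝒮.map (Finset.image f)).countP p = 𝒮.countP fun S => p (S.image f) := by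
    rw [Multiset.countP_map, Multiset.countP_eq_card_filter]
  refine ⟨?_, ?_, ?_, ?_, ?_⟩
  · simpa only [Multiset.mem_map, forall_exists_index, and_imp, forall_apply_eq_imp_iff₂]
      using fun S hS => image_subset_image (h.subset S hS)
  · simpa only [Multiset.mem_map, forall_exists_index, and_imp, forall_apply_eq_imp_iff₂]
      using fun S hS => (h.nonempty S hS).image f
  · simpa only [Multiset.mem_map, forall_exists_index, and_imp, forall_apply_eq_imp_iff₂]
      using fun S hS => card_image_le.trans (h.card_le S hS)
  · simp only [forall_mem_image, hcount, hf.mem_finset_image]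
    exact h.countP_mem
  · simp only [forall_mem_image, hcount, hf.mem_finset_image]
    exact fun a ha b hb hab => h.countP_mem_and_mem a ha b hb (hr a ha b hb hab)

theorem IsWindowCover.card_le_mul (h : IsWindowCover κ r X 𝒮) :
    Multiset.card 𝒮 ≤ κ * X.card := calc
  Multiset.card 𝒮 = (𝒮.map fun _ => 1).sum := by simp
  _ ≤ (𝒮.map fun S => ∑ _x ∈ S, 1).sum :=
    Multiset.sum_map_le_sum_map _ _ fun S hS => by simpa using (h.nonempty S hS).card_pos
  _ = ∑ x ∈ X, 𝒮.countP (x ∈ ·) • 1 :=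
    Multiset.sum_map_sum_eq_sum_countP_smul 𝒮 id h.subset _
  _ = κ * X.card := by
    rw [sum_congr rfl fun x hx => by rw [h.countP_mem x hx], sum_const, smul_eq_mul,
      smul_eq_mul, mul_one, mul_comm]

theorem IsWindowCover.countP_exists_mem_le (h : IsWindowCover κ r X 𝒮) {N : Finset α}
    (hNX : N ⊆ X) (hN : N.card ≤ 2) (hr : ∀ x ∈ N, ∀ y ∈ N, x ≠ y → r x y) :
    𝒮.countP (fun S => ∃ x ∈ N, x ∈ S) ≤ κ + 1 := by
  interval_cases hcard : N.card
  · simp [card_eq_zero.mp hcard]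
  · obtain ⟨x, rfl⟩ := card_eq_one.mp hcard
    simp only [mem_singleton, exists_eq_left]
    rw [h.countP_mem x (hNX (mem_singleton_self x))]
    exact Nat.le_succ κ
  · obtain ⟨x, y, hxy, rfl⟩ := card_eq_two.mp hcard
    simp only [mem_insert, mem_singleton, exists_eq_or_imp, exists_eq_left]
    have hx := h.countP_mem x (hNX (by simp))
    have hy := h.countP_mem y (hNX (by simp))
    have hxy := h.countP_mem_and_mem x (hNX (by simp)) y (hNX (by simp))
      (hr x (by simp) y (by simp) hxy)
    have := Multiset.countP_or_add_countP_and 𝒮 (x ∈ ·) (y ∈ ·)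
    omega

end WindowCover

section Paths
variable {α : Type*} {r : α → α → Prop} {X Y : Finset α} {l : List α} {y : α}

def MaxDegreeTwo (r : α → α → Prop) (X : Finset α) : Prop :=
  ∀ x ∈ X, ∀ y₁ ∈ X, ∀ y₂ ∈ X, ∀ y₃ ∈ X, r x y₁ → r x y₂ → r x y₃ → y₁ = y₂ ∨ y₁ = y₃ ∨ y₂ = y₃

theorem MaxDegreeTwo.mono (h : MaxDegreeTwo r X) (hYX : Y ⊆ X) : MaxDegreeTwo r Y :=
  fun x hx y₁ h₁ y₂ h₂ y₃ h₃ => h x (hYX hx) y₁ (hYX h₁) y₂ (hYX h₂) y₃ (hYX h₃)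

structure IsPathIn (r : α → α → Prop) (X : Finset α) (l : List α) : Prop where
  nodup : l.Nodup
  subset : ∀ a ∈ l, a ∈ X
  isChain : l.IsChain r

theorem IsPathIn.length_le (h : IsPathIn r X l) : l.length ≤ X.card := by
  rw [← List.toFinset_card_of_nodup h.nodup]
  exact card_le_card fun a ha => h.subset a (List.mem_toFinset.mp ha)

theorem exists_longest_isPathIn (r : α → α → Prop) (hX : X.Nonempty) :
    ∃ l, IsPathIn r X l ∧ l ≠ [] ∧ ∀ l', IsPathIn r X l' → l'.length ≤ l.length := by
  obtain ⟨x, hx⟩ := hX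
  let lengths := {n | ∃ l, IsPathIn r X l ∧ l.length = n}
  have hbdd : BddAbove lengths := ⟨X.card, by rintro _ ⟨l, hl, rfl⟩; exact hl.length_le⟩
  have hone : 1 ∈ lengths :=
    ⟨[x], ⟨List.nodup_singleton x, by simpa using hx, List.isChain_singleton x⟩, rfl⟩
  obtain ⟨l, hl, hlen⟩ := Nat.sSup_mem ⟨1, hone⟩ hbdd
  refine ⟨l, hl, ?_, fun l' hl' => hlen ▸ le_csSup hbdd ⟨l', hl', rfl⟩⟩
  rw [← List.length_pos_iff, hlen]
  exact le_csSup hbdd hone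

theorem IsPathIn.reverse [Std.Symm r] (h : IsPathIn r X l) : IsPathIn r X l.reverse :=
  ⟨List.nodup_reverse.mpr h.nodup, fun a ha => h.subset a (List.mem_reverse.mp ha),
    List.isChain_reverse.mpr (h.isChain.imp fun _ _ hab => symm_of r hab)⟩

theorem IsPathIn.mem_of_rel_head (h : IsPathIn r X l)
    (hmax : ∀ l', IsPathIn r X l' → l'.length ≤ l.length) (hl : 0 < l.length) (hy : y ∈ X)
    (hr : r y l[0]) : y ∈ l := by
  by_contra hyl
  have hpath : IsPathIn r X (y :: l) := by
    refine ⟨List.nodup_cons.mpr ⟨hyl, h.nodup⟩, ?_, List.isChain_cons.mpr ⟨?_, h.isChain⟩⟩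
    · simpa using ⟨hy, h.subset⟩
    · simpa [List.head?_eq_getElem?, List.getElem?_eq_getElem hl] using hr
  simpa using hmax _ hpath

theorem IsPathIn.mem_of_rel_last [Std.Symm r] (h : IsPathIn r X l)
    (hmax : ∀ l', IsPathIn r X l' → l'.length ≤ l.length) {i : ℕ} (hi : i + 1 = l.length)
    (hy : y ∈ X) (hr : r y l[i]) : y ∈ l := by
  have hrev := h.reverse.mem_of_rel_head (by simpa using hmax) (by simp; omega) hy
    (by simpa [List.getElem_reverse, show l.length - 1 = i by omega] using hr)
  simpa using hrev

theorem IsPathIn.eq_of_rel_interior [Std.Symm r] (hdeg : MaxDegreeTwo r X)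
    (h : IsPathIn r X l) {j : ℕ} (hj : j + 2 < l.length) (hy : y ∈ X) (hr : r l[j + 1] y) :
    y = l[j] ∨ y = l[j + 2] := by
  have hmem (k : ℕ) (hk : k < l.length) : l[k] ∈ X := h.subset _ (List.getElem_mem hk)
  have hne : l[j] ≠ l[j + 2] := fun e => by have := h.nodup.getElem_inj_iff.mp e; omega
  rcases hdeg _ (hmem _ _) _ (hmem _ _) _ (hmem _ _) _ hy
    (symm_of r (h.isChain.getElem j (by omega))) (h.isChain.getElem (j + 1) hj) hr with e | e | e
  · exact absurd e hne
  · exact .inl e.symm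
  · exact .inr e.symm

theorem IsPathIn.mem_of_rel [Std.Symm r] (hdeg : MaxDegreeTwo r X) (h : IsPathIn r X l)
    (hmax : ∀ l', IsPathIn r X l' → l'.length ≤ l.length) {x : α} (hx : x ∈ l) (hy : y ∈ X)
    (hr : r x y) : y ∈ l := by
  obtain ⟨i, hi, rfl⟩ := List.mem_iff_getElem.mp hx
  rcases i with _ | j
  · exact h.mem_of_rel_head hmax hi hy (symm_of r hr)
  by_cases hj : j + 2 < l.length
  · rcases h.eq_of_rel_interior hdeg hj hy hr with rfl | rfl <;> exact List.getElem_mem _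
  · exact h.mem_of_rel_last hmax (by omega) hy (symm_of r hr)

theorem IsPathIn.eq_succ_of_rel [Std.Symm r] (hdeg : MaxDegreeTwo r X)
    (h : IsPathIn r X l) {a b : ℕ} (ha : a < l.length) (hb : b < l.length) (hab : a < b)
    (hr : r l[a] l[b]) : b = a + 1 ∨ a = 0 ∧ b + 1 = l.length := by
  have hinj {i j : ℕ} (hi : i < l.length) (hj : j < l.length) (e : l[i] = l[j]) : i = j :=
    h.nodup.getElem_inj_iff.mp e
  rcases a with _ | a
  · by_cases hlast : b + 1 = l.length
    · exact .inr ⟨rfl, hlast⟩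
    obtain ⟨j, rfl⟩ : ∃ j, b = j + 1 := ⟨b - 1, by omega⟩
    rcases h.eq_of_rel_interior hdeg (j := j) (by omega) (h.subset _ (List.getElem_mem _))
      (symm_of r hr) with e | e <;> have := hinj _ _ e <;> omega
  · rcases h.eq_of_rel_interior hdeg (j := a) (by omega) (h.subset _ (List.getElem_mem _))
      hr with e | e <;> have := hinj _ _ e <;> omega

theorem IsPathIn.eq_add_one_of_rel [Std.Symm r] [Std.Irrefl r] (hdeg : MaxDegreeTwo r X)
    (h : IsPathIn r X l) [NeZero l.length] {i j : ZMod l.length}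
    (hr : r (l[i.val]'(ZMod.val_lt i)) (l[j.val]'(ZMod.val_lt j))) : j = i + 1 ∨ i = j + 1 := by
  wlog hij : i.val < j.val generalizing i j
  · rcases (not_lt.mp hij).lt_or_eq with hji | hji
    · exact (this (symm_of r hr) hji).symm
    · cases ZMod.val_injective _ hji
      exact absurd hr (irrefl_of r _)
  rcases h.eq_succ_of_rel hdeg _ _ hij hr with e | ⟨e0, e⟩
  · left
    rw [← ZMod.natCast_zmod_val j, e, Nat.cast_succ, ZMod.natCast_zmod_val]
  · right
    rw [← ZMod.natCast_zmod_val i, e0, ← ZMod.natCast_zmod_val j, ← Nat.cast_add_one, e,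
      ZMod.natCast_self, Nat.cast_zero]

end Paths

section Components
variable {α : Type*} [DecidableEq α] {κ : ℕ} {r : α → α → Prop} {X : Finset α}

theorem exists_closed_isWindowCover [Std.Symm r] [Std.Irrefl r] (hκ : 1 ≤ κ)
    (hdeg : MaxDegreeTwo r X) (hX : X.Nonempty) :
    ∃ C ⊆ X, C.Nonempty ∧ (∀ x ∈ C, ∀ y ∈ X, r x y → y ∈ C) ∧ ∃ 𝒮, IsWindowCover κ r C 𝒮 := by
  obtain ⟨l, hl, hne, hmax⟩ := exists_longest_isPathIn r hX
  have : NeZero l.length := ⟨(List.length_pos_iff.mpr hne).ne'⟩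
  let g : ZMod l.length → α := fun i => l[i.val]'(ZMod.val_lt i)
  have hg : Function.Injective g := fun i j e =>
    ZMod.val_injective _ (hl.nodup.getElem_inj_iff.mp e)
  have hC : univ.image g = l.toFinset := by
    ext x
    simp only [mem_image, mem_univ, true_and, List.mem_toFinset, List.mem_iff_getElem]
    constructor
    · rintro ⟨i, rfl⟩
      exact ⟨i.val, ZMod.val_lt i, rfl⟩
    · rintro ⟨k, hk, rfl⟩
      exact ⟨k, by simp [g, ZMod.val_cast_of_lt hk]⟩
  refine ⟨univ.image g, ?_, univ_nonempty.image g, ?_, _,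
    (isWindowCover_cycleCover hκ).image hg fun i _ j _ hr => hl.eq_add_one_of_rel hdeg hr⟩
  · rw [hC]
    exact fun x hx => hl.subset x (List.mem_toFinset.mp hx)
  · simp only [hC, List.mem_toFinset]
    exact fun x hx y hy hr => hl.mem_of_rel hdeg hmax hx hy hr

theorem exists_isWindowCover [Std.Symm r] [Std.Irrefl r] (hκ : 1 ≤ κ) (hdeg : MaxDegreeTwo r X) :
    ∃ 𝒮, IsWindowCover κ r X 𝒮 := by
  induction X using Finset.strongInduction with
  | H X ih =>
  rcases X.eq_empty_or_nonempty with rfl | hX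
  · exact ⟨0, isWindowCover_empty⟩
  obtain ⟨C, hCX, hCne, hclosed, 𝒮, h𝒮⟩ := exists_closed_isWindowCover hκ hdeg hX
  obtain ⟨𝒯, h𝒯⟩ := ih (X \ C) (sdiff_ssubset hCX hCne) (hdeg.mono sdiff_subset)
  have hsep : ∀ x ∈ C, ∀ y ∈ X \ C, ¬ r x y ∧ ¬ r y x := fun x hx y hy =>
    ⟨fun hr => (mem_sdiff.mp hy).2 (hclosed x hx y (mem_sdiff.mp hy).1 hr),
      fun hr => (mem_sdiff.mp hy).2 (hclosed x hx y (mem_sdiff.mp hy).1 (symm_of r hr))⟩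
  refine ⟨𝒮 + 𝒯, ?_⟩
  simpa only [union_sdiff_of_subset hCX] using h𝒮.add h𝒯 disjoint_sdiff hsep

end Components

section Matchings
variable {V : Type*} {c c' : Finset (Sym2 V)} {j j' e : Sym2 V} {v : V}

theorem IsMatchingSym2.eq_of_mem (hc : IsMatchingSym2 c) (hj : j ∈ c) (hj' : j' ∈ c) (hv : v ∈ j)
    (hv' : v ∈ j') : j = j' :=
  by_contra fun hne => hc.2 j hj j' hj' hne v hv hv'

theorem IsMatchingSym2.card_le_fintype_card [Fintype V] (hc : IsMatchingSym2 c) :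
    c.card ≤ Fintype.card V := by
  rw [← card_univ]
  refine card_le_card_of_injOn (fun j => j.out.1) (fun _ _ => mem_univ _) fun j hj j' hj' h => ?_
  have h : j.out.1 = j'.out.1 := h
  exact hc.eq_of_mem hj hj' (Sym2.out_fst_mem j) (h ▸ Sym2.out_fst_mem j')

theorem IsMatchingSym2.card_filter_meets_le_two (hc : IsMatchingSym2 c) (e : Sym2 V) :
    (c.filter fun j => ∃ v, v ∈ e ∧ v ∈ j).card ≤ 2 := by
  have hvertex (v : V) : (c.filter (v ∈ ·)).card ≤ 1 := card_le_one.mpr fun a ha b hb =>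
    hc.eq_of_mem (mem_filter.mp ha).1 (mem_filter.mp hb).1 (mem_filter.mp ha).2
      (mem_filter.mp hb).2
  induction e using Sym2.ind with
  | _ p q =>
  calc _ ≤ (c.filter (p ∈ ·) ∪ c.filter (q ∈ ·)).card := card_le_card fun j hj => by
        obtain ⟨hjc, v, hv, hvj⟩ := mem_filter.mp hj
        rcases Sym2.mem_iff.mp hv with rfl | rfl <;> simp [hjc, hvj]
    _ ≤ 2 := (card_union_le _ _).trans (add_le_add (hvertex p) (hvertex q))

theorem touchedEdges_subset (c T : Finset (Sym2 V)) : touchedEdges c T ⊆ c :=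
  filter_subset _ _

def LinkedVia (c : Finset (Sym2 V)) (x y : Sym2 V) : Prop :=
  x ≠ y ∧ ∃ e ∈ c, (∃ v, v ∈ e ∧ v ∈ x) ∧ ∃ v, v ∈ e ∧ v ∈ y

instance : Std.Symm (LinkedVia c) :=
  ⟨fun _ _ ⟨hne, e, he, hx, hy⟩ => ⟨hne.symm, e, he, hy, hx⟩⟩

instance : Std.Irrefl (LinkedVia c) :=
  ⟨fun _ h => h.1 rfl⟩

theorem maxDegreeTwo_linkedVia (hc : IsMatchingSym2 c) (hc' : IsMatchingSym2 c') :
    MaxDegreeTwo (LinkedVia c) c' := by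
  intro x hx
  -- A neighbour reached through the endpoint `z` of `x` contains the other endpoint of the edge
  -- of `c` at `z`, so there is at most one such neighbour.
  have unique {z : V} {y₁ y₂ : Sym2 V} (hz : z ∈ x) (hy₁ : y₁ ∈ c') (hy₂ : y₂ ∈ c')
      (hne₁ : x ≠ y₁) (hne₂ : x ≠ y₂) (t₁ : ∃ e ∈ c, z ∈ e ∧ ∃ p, p ∈ e ∧ p ∈ y₁)
      (t₂ : ∃ e ∈ c, z ∈ e ∧ ∃ p, p ∈ e ∧ p ∈ y₂) : y₁ = y₂ := by
    obtain ⟨e, he, hze, p₁, hp₁e, hp₁y⟩ := t₁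
    obtain ⟨e', he', hze', p₂, hp₂e, hp₂y⟩ := t₂
    obtain rfl := hc.eq_of_mem he he' hze hze'
    have hp₁z : p₁ ≠ z := by rintro rfl; exact hne₁ (hc'.eq_of_mem hx hy₁ hz hp₁y)
    have hp₂z : p₂ ≠ z := by rintro rfl; exact hne₂ (hc'.eq_of_mem hx hy₂ hz hp₂y)
    rw [(Sym2.mem_and_mem_iff hp₁z.symm).mp ⟨hze, hp₁e⟩, Sym2.mem_iff] at hp₂e
    exact hc'.eq_of_mem hy₁ hy₂ hp₁y (hp₂e.resolve_left hp₂z ▸ hp₂y)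
  induction x using Sym2.ind with
  | _ u v =>
  have split {y : Sym2 V} (h : LinkedVia c s(u, v) y) :
      (∃ e ∈ c, u ∈ e ∧ ∃ p, p ∈ e ∧ p ∈ y) ∨ ∃ e ∈ c, v ∈ e ∧ ∃ p, p ∈ e ∧ p ∈ y := by
    obtain ⟨-, e, he, ⟨q, hqe, hqx⟩, hy⟩ := h
    rcases Sym2.mem_iff.mp hqx with rfl | rfl
    exacts [.inl ⟨e, he, hqe, hy⟩, .inr ⟨e, he, hqe, hy⟩]
  intro y₁ hy₁ y₂ hy₂ y₃ hy₃ h₁ h₂ h₃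
  rcases split h₁ with t₁ | t₁ <;> rcases split h₂ with t₂ | t₂ <;>
    rcases split h₃ with t₃ | t₃ <;>
    first
    | exact .inl (unique (by simp) hy₁ hy₂ h₁.1 h₂.1 t₁ t₂)
    | exact .inr (.inl (unique (by simp) hy₁ hy₃ h₁.1 h₃.1 t₁ t₃))
    | exact .inr (.inr (unique (by simp) hy₂ hy₃ h₂.1 h₃.1 t₂ t₃))

theorem IsWindowCover.countP_mem_touchedEdges_le {κ : ℕ} {𝒮 : Multiset (Finset (Sym2 V))}
    (hc' : IsMatchingSym2 c') (h : IsWindowCover κ (LinkedVia c) c' 𝒮) (he : e ∈ c) :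
    𝒮.countP (e ∈ touchedEdges c ·) ≤ κ + 1 := by
  refine (Multiset.countP_congr rfl fun T hT => ?_).trans_le
    (h.countP_exists_mem_le (filter_subset _ _) (hc'.card_filter_meets_le_two e)
      fun x hx y hy hxy => ⟨hxy, e, he, (mem_filter.mp hx).2, (mem_filter.mp hy).2⟩)
  simp only [touchedEdges, mem_filter, he, true_and, eq_iff_iff]
  exact ⟨fun ⟨x, hxT, hxe⟩ => ⟨x, ⟨h.subset T hT hxT, hxe⟩, hxT⟩,
    fun ⟨x, ⟨_, hxe⟩, hxT⟩ => ⟨x, hxT, hxe⟩⟩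

end Matchings

/-- Decomposition lemma (following Hougardy–Vinkemeier): given matchings `c, c'` in a
graph on `r` vertices and edge weights `w_j ≥ w'_j ≥ 0`, for any `κ ≥ 1` there is a
multiset `OPT` of augmentations `T ⊆ c'` of size `≤ κ` with `|OPT| ≤ κr` and
`∑_{T ∈ OPT} gain(T) ≥ κ·W' - (κ+1)·W`, where
`gain(T) = ∑_{j∈T} w'_j - ∑_{j∈M(T)} w_j`, `W = ∑_{j∈c} w_j`, `W' = ∑_{j∈c'} w'_j`. -/
theorem matching_augmentation_decomposition
    {V : Type*} [Fintype V] (c c' : Finset (Sym2 V))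
    (hc : IsMatchingSym2 c) (hc' : IsMatchingSym2 c')
    (w w' : Sym2 V → ℝ) (hw : ∀ j, w' j ≤ w j) (hw' : ∀ j, 0 ≤ w' j)
    (κ : ℕ) (hκ : 1 ≤ κ) :
    ∃ OPT : Multiset (Finset (Sym2 V)),
      (∀ T ∈ OPT, T ⊆ c' ∧ T.card ≤ κ) ∧
      Multiset.card OPT ≤ κ * Fintype.card V ∧
      (OPT.map (fun T => (∑ j ∈ T, w' j) - ∑ j ∈ touchedEdges c T, w j)).sum
        ≥ (κ : ℝ) * (∑ j ∈ c', w' j) - ((κ : ℝ) + 1) * (∑ j ∈ c, w j) := by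
  obtain ⟨OPT, hOPT⟩ := exists_isWindowCover hκ (maxDegreeTwo_linkedVia hc hc')
  refine ⟨OPT, fun T hT => ⟨hOPT.subset T hT, hOPT.card_le T hT⟩,
    hOPT.card_le_mul.trans (Nat.mul_le_mul_left κ hc'.card_le_fintype_card), ?_⟩
  have hgain : (OPT.map fun T => ∑ j ∈ T, w' j).sum = κ * ∑ j ∈ c', w' j := by
    refine (Multiset.sum_map_sum_eq_sum_countP_smul OPT id hOPT.subset w').trans ?_
    rw [mul_sum]
    exact sum_congr rfl fun j hj => by rw [nsmul_eq_mul, ← hOPT.countP_mem j hj]; rfl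
  have hloss : (OPT.map fun T => ∑ j ∈ touchedEdges c T, w j).sum ≤ (κ + 1) * ∑ j ∈ c, w j := by
    rw [Multiset.sum_map_sum_eq_sum_countP_smul OPT (touchedEdges c)
      (fun T _ => touchedEdges_subset c T), mul_sum]
    refine sum_le_sum fun e he => ?_
    rw [nsmul_eq_mul]
    gcongr
    · exact (hw' e).trans (hw e)
    · exact_mod_cast hOPT.countP_mem_touchedEdges_le hc' he
  rw [Multiset.sum_map_sub, hgain]
  linarith
end

section
/- Consider packing constraints A x ≤ b with A ∈ [0,1]^{K×m}, width ρ = max_k (Σ_j a_{kj})/b_k, n agents with additive utilities u_{ij} ∈ [0,1], and V_i = max over feasible fractional outcomes of agent i's utility, V_max = max_i V_i. Define the MPF value R as the least r > 0 such that some fractional outcome w ∈ [0,1]^m with A w ≤ b satisfies u_i(w) ≥ V_i/r - 1 for all i. Then R ≤ min(V_max, n, ρ). -/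
/-- The maximally proportionally fair (MPF) value `R` — the least `r > 0` such that some
fractional outcome `w` satisfies `u_i(w) ≥ V_i/r - 1` for all agents — is at most
`min(V_max, n, ρ)`, where `ρ` is the width of the packing constraints.  (Since the box
constraints `w_j ≤ 1` are among the packing constraints, the width satisfies `ρ ≥ 1`.) -/
theorem mpf_value_le_min
    {n m K : ℕ} (hn : 0 < n) (hK : 0 < K)
    (a : Fin K → Fin m → ℝ) (ha : ∀ k j, a k j ∈ Set.Icc (0 : ℝ) 1)
    (b : Fin K → ℝ) (hb : ∀ k, 0 < b k)
    (u : Fin n → Fin m → ℝ) (hu : ∀ i j, u i j ∈ Set.Icc (0 : ℝ) 1)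
    (V : Fin n → ℝ)
    (hV : ∀ i, IsGreatest
      {t : ℝ | ∃ w : Fin m → ℝ, (∀ j, w j ∈ Set.Icc (0 : ℝ) 1) ∧
        (∀ k, ∑ j, a k j * w j ≤ b k) ∧ t = ∑ j, w j * u i j} (V i))
    (Vmax : ℝ) (hVmax : IsGreatest (Set.range V) Vmax)
    (ρ : ℝ) (hρ : IsGreatest {t : ℝ | ∃ k : Fin K, t = (∑ j, a k j) / b k} ρ)
    (hρ1 : 1 ≤ ρ) :
    sInf {r : ℝ | 0 < r ∧ ∃ w : Fin m → ℝ, (∀ j, w j ∈ Set.Icc (0 : ℝ) 1) ∧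
        (∀ k, ∑ j, a k j * w j ≤ b k) ∧ ∀ i, V i / r - 1 ≤ ∑ j, w j * u i j}
      ≤ min (min Vmax (n : ℝ)) ρ := by
  set S := {r : ℝ | 0 < r ∧ ∃ w : Fin m → ℝ, (∀ j, w j ∈ Set.Icc (0 : ℝ) 1) ∧
        (∀ k, ∑ j, a k j * w j ≤ b k) ∧ ∀ i, V i / r - 1 ≤ ∑ j, w j * u i j} with hSdef
  have hbdd : BddBelow S := ⟨0, fun r hr => hr.1.le⟩
  have hρ0 : (0:ℝ) < ρ := lt_of_lt_of_le one_pos hρ1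
  -- V i ≥ 0 since w = 0 is feasible
  have hV0 : ∀ i, (0:ℝ) ≤ V i := by
    intro i
    refine (hV i).2 ⟨0, ?_, ?_, ?_⟩
    · intro j; exact ⟨le_refl _, zero_le_one⟩
    · intro k; simp [(hb k).le]
    · simp
  -- choose witnesses for V i
  choose W hW1 hW2 hW3 using fun i => (hV i).1
  have hVub : ∀ i, V i ≤ Vmax := fun i => hVmax.2 ⟨i, rfl⟩
  have hVmax0 : (0:ℝ) ≤ Vmax := le_trans (hV0 ⟨0, hn⟩) (hVub ⟨0, hn⟩)
  refine le_min (le_min ?_ ?_) ?_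
  · -- bound by Vmax
    rcases eq_or_lt_of_le hVmax0 with h0 | hpos
    · -- Vmax = 0 : every positive r is in S with w = 0
      have hsub : Set.Ioi (0:ℝ) ⊆ S := by
        intro r hr
        refine ⟨hr, 0, fun j => ⟨le_refl _, zero_le_one⟩, fun k => by simp [(hb k).le], ?_⟩
        intro i
        have : V i = 0 := le_antisymm ((hVub i).trans h0.ge) (hV0 i)
        simp [this]
      calc sInf S ≤ sInf (Set.Ioi (0:ℝ)) :=
            csInf_le_csInf hbdd ⟨1, Set.mem_Ioi.mpr one_pos⟩ hsub
        _ = 0 := csInf_Ioi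
        _ ≤ Vmax := hVmax0
    · -- Vmax > 0 : Vmax ∈ S with w = 0
      refine csInf_le hbdd ⟨hpos, 0, fun j => ⟨le_refl _, zero_le_one⟩,
        fun k => by simp [(hb k).le], ?_⟩
      intro i
      have : V i / Vmax ≤ 1 := div_le_one_of_le₀ (hVub i) hVmax0
      simp
      linarith
  · -- bound by n : use the average of the W i
    have hn' : (0:ℝ) < (n:ℝ) := Nat.cast_pos.mpr hn
    refine csInf_le hbdd ⟨hn', fun j => (∑ i, W i j) / n, ?_, ?_, ?_⟩
    · intro j
      constructor
      · apply div_nonneg _ hn'.le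
        exact Finset.sum_nonneg fun i _ => (hW1 i j).1
      · rw [div_le_one hn']
        calc ∑ i, W i j ≤ ∑ _i : Fin n, (1:ℝ) :=
              Finset.sum_le_sum fun i _ => (hW1 i j).2
          _ = n := by simp
    · intro k
      have : ∑ j, a k j * ((∑ i, W i j) / n) = (∑ i, ∑ j, a k j * W i j) / n := by
        simp only [← mul_div_assoc, Finset.mul_sum, Finset.sum_div]
        exact Finset.sum_comm ..
      rw [this, div_le_iff₀ hn']
      calc ∑ i, ∑ j, a k j * W i j ≤ ∑ _i : Fin n, b k :=
            Finset.sum_le_sum fun i _ => hW2 i k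
        _ = b k * n := by simp [mul_comm]
    · intro i
      have hkey : ∑ j, ((∑ i', W i' j) / n) * u i j = (∑ i', ∑ j, W i' j * u i j) / n := by
        simp only [div_mul_eq_mul_div, Finset.sum_mul, Finset.sum_div]
        exact Finset.sum_comm ..
      rw [hkey]
      have h1 : ∑ j, W i j * u i j ≤ ∑ i', ∑ j, W i' j * u i j := by
        refine Finset.single_le_sum (f := fun i' => ∑ j, W i' j * u i j) ?_ (Finset.mem_univ i)
        intro i' _
        exact Finset.sum_nonneg fun j _ => mul_nonneg (hW1 i' j).1 (hu i j).1
      have h2 : V i / n ≤ (∑ i', ∑ j, W i' j * u i j) / n := by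
        rw [hW3 i]; gcongr
      linarith [h2]
  · -- bound by ρ : use w = 1/ρ
    refine csInf_le hbdd ⟨hρ0, fun _ => 1 / ρ, ?_, ?_, ?_⟩
    · intro j
      constructor
      · positivity
      · rw [div_le_one hρ0]; exact hρ1
    · intro k
      have hk : (∑ j, a k j) / b k ≤ ρ := hρ.2 ⟨k, rfl⟩
      have : ∑ j, a k j * (1 / ρ) = (∑ j, a k j) / ρ := by
        simp only [mul_one_div, ← Finset.sum_div]
      rw [this, div_le_iff₀ hρ0]
      calc ∑ j, a k j ≤ ρ * b k := by
            rw [div_le_iff₀ (hb k)] at hk; linarith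
        _ = b k * ρ := mul_comm _ _
    · intro i
      have hVi : V i ≤ ∑ j, u i j := by
        rw [hW3 i]
        refine Finset.sum_le_sum fun j _ => ?_
        calc W i j * u i j ≤ 1 * u i j :=
              mul_le_mul_of_nonneg_right (hW1 i j).2 (hu i j).1
          _ = u i j := one_mul _
      have : ∑ j, (1 / ρ) * u i j = (∑ j, u i j) / ρ := by
        simp only [one_div_mul_eq_div, ← Finset.sum_div]
      rw [this]
      have h2 : V i / ρ ≤ (∑ j, u i j) / ρ := by gcongr
      linarith
end

section
/- Let P be a convex compact set of feasible utility vectors in R^n_{≥0}, δ ≥ 0, ε > 0, and ε' = ε/(1+δ). If Û ∈ P satisfies max_{U'∈P} Σ_i (U'_i + ε')/(Û_i + ε') ≤ n(1+δ), then Û is a (δ,ε)-core outcome: there is no S ⊆ [n] and U' ∈ P with (|S|/n)·U'_i ≥ (1+δ)·Û_i + ε for all i ∈ S and at least one strict inequality. -/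
/-!
Suppose a coalition `S` blocks `Û` with `U'`. Rescaling the blocking inequality
`(|S|/n) U'_i ≥ (1+δ) Û_i + ε` by `1+δ` shows that each ratio `(U'_i + ε')/(Û_i + ε')` with
`i ∈ S` is at least `(1+δ) n/|S|`, strictly for one of them. The `|S|` members of the coalition
alone therefore push `∑_i (U'_i + ε')/(Û_i + ε')` above `n(1+δ)`, and the remaining ratios are
nonnegative, contradicting the optimality hypothesis.
-/

section SmoothedRatio

variable {K : Type*} [Field K] [LinearOrder K] [IsStrictOrderedRing K] {a c u v ε : K}

lemma div_le_smoothed_ratio_of_mul_add_le (ha : 0 < a) (hc : 0 < c) (hε : 0 ≤ ε)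
    (hv : 0 < v + ε / a) (h : a * v + ε ≤ c * u) :
    a / c ≤ (u + ε / a) / (v + ε / a) := by
  rw [div_le_div_iff₀ hc hv, mul_add, mul_div_cancel₀ ε ha.ne']
  have : 0 ≤ c * (ε / a) := by positivity
  linarith

lemma div_lt_smoothed_ratio_of_mul_add_lt (ha : 0 < a) (hc : 0 < c) (hε : 0 ≤ ε)
    (hv : 0 < v + ε / a) (h : a * v + ε < c * u) :
    a / c < (u + ε / a) / (v + ε / a) := by
  rw [div_lt_div_iff₀ hc hv, mul_add, mul_div_cancel₀ ε ha.ne']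
  have : 0 ≤ c * (ε / a) := by positivity
  linarith

end SmoothedRatio

lemma Finset.card_nsmul_lt_sum_univ {ι M : Type*} [Fintype ι] [AddCommMonoid M] [PartialOrder M]
    [IsOrderedCancelAddMonoid M] {S : Finset ι} {f : ι → M} {m : M} (hf : ∀ i, 0 ≤ f i)
    (hle : ∀ i ∈ S, m ≤ f i) (hlt : ∃ i ∈ S, m < f i) :
    S.card • m < ∑ i, f i :=
  calc S.card • m = ∑ _i ∈ S, m := (Finset.sum_const m).symm
    _ < ∑ i ∈ S, f i := Finset.sum_lt_sum hle hlt
    _ ≤ ∑ i, f i := Finset.sum_le_univ_sum_of_nonneg hf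

theorem approx_optimality_implies_approx_core_general
    {n : ℕ} (P : Set (Fin n → ℝ))
    (hnonneg : ∀ U ∈ P, ∀ i, 0 ≤ U i)
    (δ ε : ℝ) (hδ : 0 ≤ δ) (hε : 0 < ε)
    (Uhat : Fin n → ℝ) (hUhat : Uhat ∈ P)
    (hopt : ∀ U' ∈ P, ∑ i, (U' i + ε / (1 + δ)) / (Uhat i + ε / (1 + δ))
              ≤ (n : ℝ) * (1 + δ)) :
    ¬ ∃ (S : Finset (Fin n)) (U' : Fin n → ℝ), U' ∈ P ∧
        (∀ i ∈ S, ((S.card : ℝ) / n) * U' i ≥ (1 + δ) * Uhat i + ε) ∧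
        (∃ i ∈ S, ((S.card : ℝ) / n) * U' i > (1 + δ) * Uhat i + ε) := by
  rintro ⟨S, U', hU', hblock, i₀, hi₀, hstrict⟩
  have hδ' : (0 : ℝ) < 1 + δ := by linarith
  have hn : (0 : ℝ) < n := by exact_mod_cast i₀.pos
  have hS : (0 : ℝ) < S.card := by exact_mod_cast Finset.card_pos.mpr ⟨i₀, hi₀⟩
  have hc : (0 : ℝ) < S.card / n := div_pos hS hn
  have hε' : 0 < ε / (1 + δ) := div_pos hε hδ'
  have hden : ∀ i, 0 < Uhat i + ε / (1 + δ) := fun i => by linarith [hnonneg Uhat hUhat i]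
  have hsum := Finset.card_nsmul_lt_sum_univ (S := S) (m := (1 + δ) / (S.card / n))
    (fun i => div_nonneg (by linarith [hnonneg U' hU' i]) (hden i).le)
    (fun i hi => div_le_smoothed_ratio_of_mul_add_le hδ' hc hε.le (hden i) (hblock i hi))
    ⟨i₀, hi₀, div_lt_smoothed_ratio_of_mul_add_lt hδ' hc hε.le (hden i₀) hstrict⟩
  have hcard : S.card • ((1 + δ) / (S.card / n)) = (n : ℝ) * (1 + δ) := by
    rw [nsmul_eq_mul]
    field_simp
  linarith [hopt U' hU']

/-- Approximate first-order optimality of the smoothed Nash welfare implies an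
approximate core: if `Û ∈ P` satisfies `max_{U'∈P} ∑ i (U'_i+ε')/(Û_i+ε') ≤ n(1+δ)`
with `ε' = ε/(1+δ)`, then `Û` is a `(δ,ε)`-core outcome. -/
theorem approx_optimality_implies_approx_core
    {n : ℕ} (P : Set (Fin n → ℝ)) (hconv : Convex ℝ P) (hcpt : IsCompact P)
    (hnonneg : ∀ U ∈ P, ∀ i, 0 ≤ U i)
    (δ ε : ℝ) (hδ : 0 ≤ δ) (hε : 0 < ε)
    (Uhat : Fin n → ℝ) (hUhat : Uhat ∈ P)
    (hopt : ∀ U' ∈ P, ∑ i, (U' i + ε / (1 + δ)) / (Uhat i + ε / (1 + δ))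
              ≤ (n : ℝ) * (1 + δ)) :
    ¬ ∃ (S : Finset (Fin n)) (U' : Fin n → ℝ), U' ∈ P ∧
        (∀ i ∈ S, ((S.card : ℝ) / n) * U' i ≥ (1 + δ) * Uhat i + ε) ∧
        (∃ i ∈ S, ((S.card : ℝ) / n) * U' i > (1 + δ) * Uhat i + ε) :=
  approx_optimality_implies_approx_core_general P hnonneg δ ε hδ hε Uhat hUhat hopt
end

section
/- Let c* be a fractional core outcome with agent utilities U*_i, and suppose an integral outcome ĉ with utilities Û_i satisfies: for every subset S of agents and feasible outcome h, there exists i ∈ S with U*_i ≥ (|S|/n)·u_i(h), and Û_i ≥ (U*_i - α)/(1+δ) for all i. Then ĉ is a (δ, α')-core outcome for every α' > α. -/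
/-- Reduction: if `ĉ` approximately preserves the utilities of a fractional core
outcome (utilities `U*`), i.e. `u_i(ĉ) ≥ (U*_i - α)/(1+δ)` for all `i`, and `U*`
satisfies the core condition, then `ĉ` is a `(δ,α')`-core outcome for every `α' > α`. -/
theorem fractional_core_rounding_gives_approx_core
    {n : ℕ} {Outcome : Type*} (Feas : Set Outcome)
    (u : Fin n → Outcome → ℝ) (Ustar : Fin n → ℝ)
    (δ α : ℝ) (hδ : 0 ≤ δ) (hα : 0 ≤ α)
    (chat : Outcome) (hchat : chat ∈ Feas)
    (hcore : ∀ S : Finset (Fin n), S.Nonempty → ∀ h ∈ Feas,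
      ∃ i ∈ S, Ustar i ≥ ((S.card : ℝ) / n) * u i h)
    (hpreserve : ∀ i, u i chat ≥ (Ustar i - α) / (1 + δ)) :
    ∀ α' : ℝ, α' > α →
      ¬ ∃ (S : Finset (Fin n)) (h : Outcome), h ∈ Feas ∧
          (∀ i ∈ S, ((S.card : ℝ) / n) * u i h ≥ (1 + δ) * u i chat + α') ∧
          (∃ i ∈ S, ((S.card : ℝ) / n) * u i h > (1 + δ) * u i chat + α') := by
  intro α' hα' ⟨S, h, hF, hall, j, hjS, hstrict⟩
  have hSne : S.Nonempty := ⟨j, hjS⟩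
  obtain ⟨i, hiS, hi⟩ := hcore S hSne h hF
  have h1 : (0:ℝ) < 1 + δ := by linarith
  have hp := hpreserve i
  have hp' : (1 + δ) * u i chat ≥ Ustar i - α := by
    have := (div_le_iff₀ h1).mp hp
    linarith
  have := hall i hiS
  linarith
end

section
/- There exists an instance with packing constraints A x ≤ 1 (b = 1, width ρ = 2) and m elements for which no integral outcome is a (δ, m/4)-core outcome for any δ > 0. Concretely, take the complete bipartite graph K_{m/2,m/2} whose vertices are elements, constraints forcing an independent set, and two agents with unit utility on opposite sides: any feasible outcome gives some agent utility 0, who can deviate to get utility m/2, scaled to m/4. -/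
/-!
A feasible outcome lies within one side of the bipartition, so the agent who values only the
other side gets utility `0`. Deviating alone to the whole other side gives that agent `m / 2`,
which the factor `1 / 2` of a singleton coalition among two agents turns into `m / 4`: this
reaches `(1 + δ) · 0 + m / 4` whatever `δ` is.
-/

open Finset

theorem Fin.card_filter_le_val {n k : ℕ} : #{i : Fin n | k ≤ (i : ℕ)} = n - k := by
  have hsplit := card_filter_add_card_filter_not (s := (univ : Finset (Fin n)))
    (fun i : Fin n => (i : ℕ) < k)
  simp only [not_lt, card_univ, Fintype.card_fin, Fin.card_filter_val_lt] at hsplit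
  omega

theorem cast_card_filter_val_lt_half {m : ℕ} (hm : Even m) :
    (#{j : Fin m | (j : ℕ) < m / 2} : ℝ) = m / 2 := by
  rw [Fin.card_filter_val_lt, min_eq_right (Nat.div_le_self m 2),
    Nat.cast_div_charZero (even_iff_two_dvd.1 hm), Nat.cast_ofNat]

theorem cast_card_filter_half_le_val {m : ℕ} (hm : Even m) :
    (#{j : Fin m | m / 2 ≤ (j : ℕ)} : ℝ) = m / 2 := by
  rw [Fin.card_filter_le_val, Nat.cast_sub (Nat.div_le_self m 2),
    Nat.cast_div_charZero (even_iff_two_dvd.1 hm), Nat.cast_ofNat, sub_half]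

theorem half_sum_ge_of_eq_zero_of_eq_one {ι : Type*} {v : ι → ℝ} {c c' : Finset ι}
    (hc : ∀ j ∈ c, v j = 0) (hc' : ∀ j ∈ c', v j = 1) (δ : ℝ) :
    (1 / 2 : ℝ) * ∑ j ∈ c', v j ≥ (1 + δ) * ∑ j ∈ c, v j + #c' / 2 := by
  rw [sum_eq_zero hc, sum_congr rfl hc', sum_const, nsmul_one]
  linarith

/-- Lower bound for packing constraints with small `b`: elements are the vertices of
the complete bipartite graph `K_{m/2,m/2}` (left = indices `< m/2`), the edge
constraints `x_u + x_v ≤ 1` force feasible outcomes to lie within one side, and two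
agents have unit utility on opposite sides.  Every feasible outcome gives some agent
utility `0`, and that agent can deviate to the whole opposite side, obtaining utility
`m/2`, scaled down (as a singleton coalition among `2` agents) to `m/4`.  Hence no
feasible outcome is a `(δ, m/4)`-core outcome for any `δ > 0`. -/
theorem no_core_independent_set (m : ℕ) (hm : Even m) :
    ∃ u : Fin 2 → Fin m → ℝ,
      (∀ j : Fin m, u 0 j = if (j : ℕ) < m / 2 then 1 else 0) ∧
      (∀ j : Fin m, u 1 j = if (j : ℕ) < m / 2 then 0 else 1) ∧
      ∀ δ : ℝ, 0 < δ →
        ∀ c : Finset (Fin m),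
          ((∀ j ∈ c, (j : ℕ) < m / 2) ∨ (∀ j ∈ c, m / 2 ≤ (j : ℕ))) →
          ∃ (i : Fin 2) (c' : Finset (Fin m)),
            ((∀ j ∈ c', (j : ℕ) < m / 2) ∨ (∀ j ∈ c', m / 2 ≤ (j : ℕ))) ∧
            (1 / 2 : ℝ) * (∑ j ∈ c', u i j)
              ≥ (1 + δ) * (∑ j ∈ c, u i j) + (m : ℝ) / 4 := by
  refine ⟨![fun j => if (j : ℕ) < m / 2 then 1 else 0,
      fun j => if (j : ℕ) < m / 2 then 0 else 1], fun _ => rfl, fun _ => rfl, ?_⟩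
  intro δ _ c hc
  have hquarter : (m : ℝ) / 2 / 2 = m / 4 := by ring
  rcases hc with hleft | hright
  · have hblock := half_sum_ge_of_eq_zero_of_eq_one
      (v := fun j : Fin m => if (j : ℕ) < m / 2 then 0 else 1) (c' := {j | m / 2 ≤ (j : ℕ)})
      (fun j hj => if_pos (hleft j hj)) (fun j hj => if_neg (not_lt.2 (mem_filter.1 hj).2)) δ
    rw [cast_card_filter_half_le_val hm, hquarter] at hblock
    exact ⟨1, _, Or.inr fun j hj => (mem_filter.1 hj).2, hblock⟩
  · have hblock := half_sum_ge_of_eq_zero_of_eq_one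
      (v := fun j : Fin m => if (j : ℕ) < m / 2 then 1 else 0) (c' := {j | (j : ℕ) < m / 2})
      (fun j hj => if_neg (not_lt.2 (hright j hj))) (fun j hj => if_pos (mem_filter.1 hj).2) δ
    rw [cast_card_filter_val_lt_half hm, hquarter] at hblock
    exact ⟨0, _, Or.inl fun j hj => (mem_filter.1 hj).2, hblock⟩
end
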